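/- arXiv:2505.08839 — 6 statements merged into one kernel-verified Lean document; each statement's English description precedes it below -/
import Mathlib

section
/- Let M and N belong to the class LC. Then the following are equivalent: (i) there exist C ≥ 0, B ≥ 1 and ℓ > 0 such that 2ℓ·ω_N(t) ≤ ω_M((Bt)^ℓ) + C for all t ≥ 0; (ii) there exist A, A₁ ≥ 1 and ℓ > 0 such that M_{2p} ≤ A₁·A^{2pℓ}·N_p^{2ℓ} for all p ∈ ℕ. Moreover, the parameter ℓ can be chosen to be the same in (i) and (ii), with correspondences A₁ = e^C and B = A. -/
open Real Filter Set

noncomputable section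

/-- The class `LC` of normalized log-convex sequences with `(M_p)^{1/p} → ∞`. -/
def IsLC (M : ℕ → ℝ) : Prop :=
  (∀ p, 0 < M p) ∧ M 0 = 1 ∧ 1 ≤ M 1 ∧
  (∀ p : ℕ, 1 ≤ p → (M p) ^ 2 ≤ M (p - 1) * M (p + 1)) ∧
  Filter.Tendsto (fun p : ℕ => (M p) ^ ((p : ℝ)⁻¹)) Filter.atTop Filter.atTop

/-- The sequence of quotients `μ_0 = 1`, `μ_p = M_p / M_{p-1}`. -/
def seqQuot (M : ℕ → ℝ) (p : ℕ) : ℝ :=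
  if p = 0 then 1 else M p / M (p - 1)

/-- The associated weight function `ω_M(t) = sup_p log(t^p / M_p)`. -/
def omegaM (M : ℕ → ℝ) (t : ℝ) : ℝ :=
  ⨆ p : ℕ, Real.log (t ^ p / M p)

/-- The auxiliary sequence `M̃^a_p = (M_{ap})^{1/a}`. -/
def tildeSeq (M : ℕ → ℝ) (a : ℕ) (p : ℕ) : ℝ :=
  (M (a * p)) ^ ((a : ℝ)⁻¹)

/-- Condition (genmg) for the parameter `d`. -/
def genMG (M : ℕ → ℝ) (d : ℕ) : Prop :=
  ∃ A : ℝ, 1 ≤ A ∧ ∀ p : ℕ, 1 ≤ p →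
    seqQuot M p ≤ A * (M (d * p)) ^ (((d : ℝ) * (p : ℝ))⁻¹)

/-- The moderate growth index `g(M) ∈ ℕ ∪ {+∞}`. -/
def gIndex (M : ℕ → ℝ) : ℕ∞ :=
  sInf {e : ℕ∞ | ∃ n : ℕ, 0 < n ∧ genMG M n ∧ e = (n : ℕ∞)}

/-- The relation `M ≼ N`, i.e. `sup_{p ≥ 1} (M_p/N_p)^{1/p} < ∞`. -/
def Preceq (M N : ℕ → ℝ) : Prop :=
  ∃ C : ℝ, ∀ p : ℕ, 1 ≤ p → (M p / N p) ^ ((p : ℝ)⁻¹) ≤ C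

/-- The class `W₀` of normalized weight functions. -/
def IsW0 (ω : ℝ → ℝ) : Prop :=
  ContinuousOn ω (Set.Ici 0) ∧
  MonotoneOn ω (Set.Ici 0) ∧
  (∀ t ∈ Set.Icc (0 : ℝ) 1, ω t = 0) ∧
  Filter.Tendsto ω Filter.atTop Filter.atTop ∧
  (fun t => Real.log t) =o[Filter.atTop] ω ∧
  ConvexOn ℝ Set.univ (fun t => ω (Real.exp t))

/-- The Legendre–Fenchel–Young conjugate `φ*_ω(x) = sup{xy − ω(e^y) : y ≥ 0}`. -/
def phiStar (ω : ℝ → ℝ) (x : ℝ) : ℝ :=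
  sSup {z : ℝ | ∃ y : ℝ, 0 ≤ y ∧ z = x * y - ω (Real.exp y)}

/-- The associated weight matrix `W^(ℓ)_p = exp(φ*_ω(ℓp)/ℓ)`. -/
def Wmat (ω : ℝ → ℝ) (l : ℝ) (p : ℕ) : ℝ :=
  Real.exp (phiStar ω (l * p) / l)

/-- Condition `(ω₆)`. -/
def Omega6 (ω : ℝ → ℝ) : Prop :=
  ∃ H : ℝ, 1 ≤ H ∧ ∀ t : ℝ, 0 ≤ t → 2 * ω t ≤ ω (H * t) + H

/-- The counting function `Σ_M(t) = #{p ≥ 1 : μ_p ≤ t}`. -/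
def SigmaM (M : ℕ → ℝ) (t : ℝ) : ℕ :=
  Set.ncard {p : ℕ | 1 ≤ p ∧ seqQuot M p ≤ t}

end

section Aux
variable {M : ℕ → ℝ}

lemma seqQuot_pos (hM : IsLC M) (p : ℕ) : 0 < seqQuot M p := by
  unfold seqQuot
  split
  · norm_num
  · exact div_pos (hM.1 _) (hM.1 _)

lemma M_succ (hM : IsLC M) (p : ℕ) : M (p + 1) = M p * seqQuot M (p + 1) := by
  unfold seqQuot
  simp only [Nat.add_sub_cancel, Nat.succ_ne_zero, if_false]
  field_simp [(hM.1 p).ne']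

lemma seqQuot_mono (hM : IsLC M) : Monotone (seqQuot M) := by
  apply monotone_nat_of_le_succ
  intro p
  match p with
  | 0 =>
    have h0 : seqQuot M 0 = 1 := by simp [seqQuot]
    have h1 : seqQuot M 1 = M 1 := by
      unfold seqQuot; simp [hM.2.1]
    rw [h0, h1]; exact hM.2.2.1
  | q + 1 =>
    have h := hM.2.2.2.1 (q + 1) (by omega)
    simp only [Nat.add_sub_cancel] at h
    unfold seqQuot
    simp only [Nat.succ_ne_zero, if_false, Nat.add_sub_cancel]
    rw [div_le_div_iff₀ (hM.1 q) (hM.1 (q+1))]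
    nlinarith [hM.1 q, hM.1 (q+1), hM.1 (q+2), sq_nonneg (M (q+1))]

lemma omega_bdd (hM : IsLC M) {t : ℝ} (ht : 0 ≤ t) :
    BddAbove (Set.range fun p : ℕ => Real.log (t ^ p / M p)) := by
  obtain ⟨P, hP⟩ := (Filter.tendsto_atTop.1 hM.2.2.2.2 (t + 1)).exists_forall_of_atTop
  have key : ∀ p, P + 1 ≤ p → Real.log (t ^ p / M p) ≤ 0 := by
    intro p hp
    have hp0 : p ≠ 0 := by omega
    have h1 : t + 1 ≤ M p ^ ((p : ℝ)⁻¹) := hP p (by omega)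
    have h2 : (t + 1) ^ p ≤ M p := by
      calc (t + 1) ^ p ≤ (M p ^ ((p : ℝ)⁻¹)) ^ p := by
            exact pow_le_pow_left₀ (by linarith) h1 p
        _ = M p := Real.rpow_inv_natCast_pow (hM.1 p).le hp0
    have h3 : t ^ p ≤ (t + 1) ^ p := pow_le_pow_left₀ ht (by linarith) p
    apply Real.log_nonpos (div_nonneg (pow_nonneg ht p) (hM.1 p).le)
    rw [div_le_one (hM.1 p)]
    linarith
  refine ⟨max 0 ((Finset.range (P + 1)).sup' (by simp) fun p => Real.log (t ^ p / M p)), ?_⟩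
  rintro x ⟨p, rfl⟩
  by_cases hp : p < P + 1
  · exact le_max_of_le_right (Finset.le_sup' (fun q => Real.log (t ^ q / M q)) (Finset.mem_range.2 hp))
  · exact le_max_of_le_left (key p (le_of_not_gt hp))

lemma term_le_omega (hM : IsLC M) {t : ℝ} (ht : 0 ≤ t) (p : ℕ) :
    Real.log (t ^ p / M p) ≤ omegaM M t :=
  le_ciSup (omega_bdd hM ht) p

lemma omega_nonneg (hM : IsLC M) {t : ℝ} (ht : 0 ≤ t) : 0 ≤ omegaM M t := by
  have := term_le_omega hM ht 0
  simpa [hM.2.1] using this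

end Aux

section Key
variable {M : ℕ → ℝ}

lemma M_prod (hM : IsLC M) (a k : ℕ) :
    M (a + k) = M a * ∏ i ∈ Finset.range k, seqQuot M (a + i + 1) := by
  induction k with
  | zero => simp
  | succ k ih =>
    have : a + (k + 1) = (a + k) + 1 := by ring
    rw [this, M_succ hM, ih, Finset.prod_range_succ, mul_assoc]

lemma key_ineq (hM : IsLC M) (p q : ℕ) :
    M (2 * p) * (seqQuot M (2 * p + 1)) ^ q ≤ M q * (seqQuot M (2 * p + 1)) ^ (2 * p) := by
  set s := seqQuot M (2 * p + 1) with hs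
  have hspos : 0 < s := seqQuot_pos hM _
  rcases le_total q (2 * p) with hq | hq
  · obtain ⟨k, hk⟩ := Nat.exists_eq_add_of_le hq
    have hMle : M (2 * p) ≤ M q * s ^ k := by
      rw [hk, M_prod hM q k]
      have : ∏ i ∈ Finset.range k, seqQuot M (q + i + 1) ≤ ∏ i ∈ Finset.range k, s := by
        apply Finset.prod_le_prod
        · intro i _; exact (seqQuot_pos hM _).le
        · intro i hi
          apply seqQuot_mono hM
          have := Finset.mem_range.1 hi
          omega
      calc M q * ∏ i ∈ Finset.range k, seqQuot M (q + i + 1)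
          ≤ M q * ∏ i ∈ Finset.range k, s := by
            exact mul_le_mul_of_nonneg_left this (hM.1 q).le
        _ = M q * s ^ k := by rw [Finset.prod_const, Finset.card_range]
    calc M (2 * p) * s ^ q ≤ (M q * s ^ k) * s ^ q := by
          exact mul_le_mul_of_nonneg_right hMle (pow_nonneg hspos.le q)
      _ = M q * s ^ (2 * p) := by rw [hk, pow_add]; ring
  · obtain ⟨k, hk⟩ := Nat.exists_eq_add_of_le hq
    have hMge : M (2 * p) * s ^ k ≤ M q := by
      rw [hk, M_prod hM (2 * p) k]
      have : ∏ i ∈ Finset.range k, s ≤ ∏ i ∈ Finset.range k, seqQuot M (2 * p + i + 1) := by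
        apply Finset.prod_le_prod
        · intro i _; exact hspos.le
        · intro i _
          apply seqQuot_mono hM
          omega
      calc M (2 * p) * s ^ k = M (2 * p) * ∏ i ∈ Finset.range k, s := by
            rw [Finset.prod_const, Finset.card_range]
        _ ≤ M (2 * p) * ∏ i ∈ Finset.range k, seqQuot M (2 * p + i + 1) :=
            mul_le_mul_of_nonneg_left this (hM.1 _).le
    calc M (2 * p) * s ^ q = (M (2 * p) * s ^ k) * s ^ (2 * p) := by
          rw [hk, pow_add]; ring
      _ ≤ M q * s ^ (2 * p) := mul_le_mul_of_nonneg_right hMge (pow_nonneg hspos.le _)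

lemma key_attain (hM : IsLC M) (p : ℕ) :
    omegaM M (seqQuot M (2 * p + 1)) ≤
      (2 * p : ℝ) * Real.log (seqQuot M (2 * p + 1)) - Real.log (M (2 * p)) := by
  set s := seqQuot M (2 * p + 1) with hs
  have hspos : 0 < s := seqQuot_pos hM _
  have hgoal : (2 * p : ℝ) * Real.log s - Real.log (M (2 * p)) =
      Real.log (s ^ (2 * p) / M (2 * p)) := by
    rw [Real.log_div (pow_pos hspos _).ne' (hM.1 _).ne', Real.log_pow]
    push_cast
    ring
  rw [hgoal]
  apply ciSup_le
  intro q
  apply Real.log_le_log (div_pos (pow_pos hspos q) (hM.1 q))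
  rw [div_le_div_iff₀ (hM.1 q) (hM.1 (2 * p))]
  nlinarith [key_ineq hM p q]

end Key

section Main
variable {M N : ℕ → ℝ}

lemma main_A (hM : IsLC M) (hN : IsLC N) {l : ℝ} (hl : 0 < l) (C B : ℝ)
    (hC : 0 ≤ C) (hB : 1 ≤ B)
    (h : ∀ t : ℝ, 0 ≤ t → 2 * l * omegaM N t ≤ omegaM M ((B * t) ^ l) + C) (p : ℕ) :
    M (2 * p) ≤ Real.exp C * B ^ (2 * (p : ℝ) * l) * (N p) ^ (2 * l) := by
  have hB0 : (0 : ℝ) < B := lt_of_lt_of_le one_pos hB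
  set s := seqQuot M (2 * p + 1) with hsdef
  have hs : 0 < s := seqQuot_pos hM _
  set t := s ^ (l⁻¹ : ℝ) / B with htdef
  have ht : 0 < t := div_pos (Real.rpow_pos_of_pos hs _) hB0
  have hBt : B * t = s ^ (l⁻¹ : ℝ) := by
    rw [htdef]; field_simp
  have hst : (B * t) ^ l = s := by
    rw [hBt]
    exact Real.rpow_inv_rpow hs.le hl.ne'
  have h1 : 2 * l * omegaM N t ≤ omegaM M s + C := by
    have := h t ht.le
    rwa [hst] at this
  have h2 : (p : ℝ) * Real.log t - Real.log (N p) ≤ omegaM N t := by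
    have := term_le_omega hN ht.le p
    rwa [Real.log_div (pow_pos ht p).ne' (hN.1 p).ne', Real.log_pow] at this
  have h3 : omegaM M s ≤ (2 * p : ℝ) * Real.log s - Real.log (M (2 * p)) :=
    key_attain hM p
  have h4 : Real.log t = l⁻¹ * Real.log s - Real.log B := by
    rw [htdef, Real.log_div (Real.rpow_pos_of_pos hs _).ne' hB0.ne',
      Real.log_rpow hs]
  have h2' : 2 * l * ((p : ℝ) * Real.log t - Real.log (N p)) ≤ 2 * l * omegaM N t :=
    mul_le_mul_of_nonneg_left h2 (by linarith)
  have e1 : 2 * l * ((p : ℝ) * Real.log t - Real.log (N p)) =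
      2 * (p : ℝ) * Real.log s - (2 * (p : ℝ) * l) * Real.log B -
        (2 * l) * Real.log (N p) := by
    rw [h4]; field_simp
  have hlog : Real.log (M (2 * p)) ≤
      C + (2 * (p : ℝ) * l) * Real.log B + (2 * l) * Real.log (N p) := by
    push_cast at h3
    linarith [e1 ▸ h2']
  calc M (2 * p) = Real.exp (Real.log (M (2 * p))) := (Real.exp_log (hM.1 _)).symm
    _ ≤ Real.exp (C + (2 * (p : ℝ) * l) * Real.log B + (2 * l) * Real.log (N p)) :=
        Real.exp_le_exp.2 hlog
    _ = Real.exp C * B ^ (2 * (p : ℝ) * l) * (N p) ^ (2 * l) := by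
        rw [Real.exp_add, Real.exp_add, Real.rpow_def_of_pos hB0,
          Real.rpow_def_of_pos (hN.1 p)]
        ring_nf

lemma main_B (hM : IsLC M) (hN : IsLC N) {l : ℝ} (hl : 0 < l) (A A1 : ℝ)
    (hA : 1 ≤ A) (hA1 : 1 ≤ A1)
    (h : ∀ p : ℕ, M (2 * p) ≤ A1 * A ^ (2 * (p : ℝ) * l) * (N p) ^ (2 * l))
    (t : ℝ) (ht : 0 ≤ t) :
    2 * l * omegaM N t ≤ omegaM M ((A * t) ^ l) + Real.log A1 := by
  have hA0 : (0 : ℝ) < A := lt_of_lt_of_le one_pos hA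
  have hlogA1 : 0 ≤ Real.log A1 := Real.log_nonneg hA1
  set s := (A * t) ^ l with hsdef
  have hs0 : 0 ≤ s := Real.rpow_nonneg (mul_nonneg hA0.le ht) l
  have hωM0 : 0 ≤ omegaM M s := omega_nonneg hM hs0
  have hsuff : omegaM N t ≤ (omegaM M s + Real.log A1) / (2 * l) := by
    apply ciSup_le
    intro q
    rcases eq_or_lt_of_le ht with heq | htpos
    · rcases Nat.eq_zero_or_pos q with hq | hq
      · subst hq
        simp only [pow_zero, hN.2.1, div_one, Real.log_one]
        positivity
      · rw [← heq, zero_pow (by omega), zero_div, Real.log_zero]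
        positivity
    · have hs : 0 < s := Real.rpow_pos_of_pos (mul_pos hA0 htpos) l
      rw [le_div_iff₀ (by linarith : (0:ℝ) < 2 * l)]
      have hterm : Real.log (s ^ (2 * q) / M (2 * q)) ≤ omegaM M s :=
        term_le_omega hM hs0 (2 * q)
      have hterm' : (2 * q : ℝ) * Real.log s - Real.log (M (2 * q)) ≤ omegaM M s := by
        rwa [Real.log_div (pow_pos hs _).ne' (hM.1 _).ne', Real.log_pow,
          Nat.cast_mul, Nat.cast_ofNat] at hterm
      have hhyp : Real.log (M (2 * q)) ≤
          Real.log A1 + (2 * (q : ℝ) * l) * Real.log A + (2 * l) * Real.log (N q) := by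
        have := Real.log_le_log (hM.1 (2 * q)) (h q)
        rwa [Real.log_mul (mul_pos (by linarith) (Real.rpow_pos_of_pos hA0 _)).ne'
            (Real.rpow_pos_of_pos (hN.1 q) _).ne',
          Real.log_mul (by linarith : (0:ℝ) < A1).ne' (Real.rpow_pos_of_pos hA0 _).ne',
          Real.log_rpow hA0, Real.log_rpow (hN.1 q)] at this
      have hlogs : Real.log s = l * (Real.log A + Real.log t) := by
        rw [hsdef, Real.log_rpow (mul_pos hA0 htpos), Real.log_mul hA0.ne' htpos.ne']
      have hlogterm : Real.log (t ^ q / N q) = (q : ℝ) * Real.log t - Real.log (N q) := by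
        rw [Real.log_div (pow_pos htpos q).ne' (hN.1 q).ne', Real.log_pow]
      rw [hlogterm]
      nlinarith [hterm', hhyp, hlogs]
  calc 2 * l * omegaM N t ≤ 2 * l * ((omegaM M s + Real.log A1) / (2 * l)) :=
        mul_le_mul_of_nonneg_left hsuff (by linarith)
    _ = omegaM M s + Real.log A1 := by field_simp

end Main

theorem stmt9 (M N : ℕ → ℝ) (hM : IsLC M) (hN : IsLC N) :
    ((∃ C : ℝ, 0 ≤ C ∧ ∃ B : ℝ, 1 ≤ B ∧ ∃ l : ℝ, 0 < l ∧ ∀ t : ℝ, 0 ≤ t →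
        2 * l * omegaM N t ≤ omegaM M ((B * t) ^ l) + C) ↔
      (∃ A A1 : ℝ, 1 ≤ A ∧ 1 ≤ A1 ∧ ∃ l : ℝ, 0 < l ∧ ∀ p : ℕ,
        M (2 * p) ≤ A1 * A ^ (2 * (p : ℝ) * l) * (N p) ^ (2 * l))) ∧
    (∀ l : ℝ, 0 < l →
      (∀ C B : ℝ, 0 ≤ C → 1 ≤ B →
        (∀ t : ℝ, 0 ≤ t → 2 * l * omegaM N t ≤ omegaM M ((B * t) ^ l) + C) →
        ∀ p : ℕ, M (2 * p) ≤ Real.exp C * B ^ (2 * (p : ℝ) * l) * (N p) ^ (2 * l)) ∧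
      (∀ A A1 : ℝ, 1 ≤ A → 1 ≤ A1 →
        (∀ p : ℕ, M (2 * p) ≤ A1 * A ^ (2 * (p : ℝ) * l) * (N p) ^ (2 * l)) →
        ∀ t : ℝ, 0 ≤ t →
          2 * l * omegaM N t ≤ omegaM M ((A * t) ^ l) + Real.log A1)) := by
  constructor
  · constructor
    · rintro ⟨C, hC, B, hB, l, hl, h⟩
      exact ⟨B, Real.exp C, hB, Real.one_le_exp hC, l, hl,
        fun p => main_A hM hN hl C B hC hB h p⟩
    · rintro ⟨A, A1, hA, hA1, l, hl, h⟩
      exact ⟨Real.log A1, Real.log_nonneg hA1, A, hA, l, hl,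
        fun t ht => main_B hM hN hl A A1 hA hA1 h t ht⟩
  · intro l hl
    exact ⟨fun C B hC hB h p => main_A hM hN hl C B hC hB h p,
      fun A A1 hA hA1 h t ht => main_B hM hN hl A A1 hA hA1 h t ht⟩
end

section
/- Let M, N, L belong to the class LC. Then the following are equivalent: (i) there exist a ∈ ℕ_{>0} and B ≥ 1 such that L_{2p} ≤ B^p·N_p·(M_{ap})^{1/a} for all p ∈ ℕ; (ii) there exist a ∈ ℕ_{>0}, A ≥ 1 and C ≥ 0 such that ω_{N·M̃^a}(t²) ≤ ω_L(At) + C for all t ≥ 0, where N·M̃^a denotes the pointwise product sequence. Moreover, one can take the same parameter a in both estimates, and if (ii) holds with some a then it also holds for every a' ≥ a. -/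
open Real Filter Set

/-- Condition (i) of Theorem `upptrafothm` for the parameter `a`. -/
def S11P1 (M N L : ℕ → ℝ) (a : ℕ) : Prop :=
  ∃ B : ℝ, 1 ≤ B ∧ ∀ p : ℕ, L (2 * p) ≤ B ^ p * N p * (M (a * p)) ^ ((a : ℝ)⁻¹)

/-- Condition (ii) of Theorem `upptrafothm` for the parameter `a`. -/
def S11P2 (M N L : ℕ → ℝ) (a : ℕ) : Prop :=
  ∃ A : ℝ, 1 ≤ A ∧ ∃ C : ℝ, 0 ≤ C ∧ ∀ t : ℝ, 0 ≤ t →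
    omegaM (fun p => N p * tildeSeq M a p) (t ^ 2) ≤ omegaM L (A * t) + C

namespace Stmt11Aux

variable {M : ℕ → ℝ}

lemma mu_eq (M : ℕ → ℝ) {j : ℕ} (hj : j ≠ 0) : seqQuot M j = M j / M (j-1) := by
  simp [seqQuot, hj]

lemma mu_pos (hM : IsLC M) (p : ℕ) : 0 < seqQuot M p := by
  obtain ⟨hpos, -⟩ := hM
  rcases eq_or_ne p 0 with rfl | hp
  · simp [seqQuot]
  · rw [mu_eq M hp]; exact div_pos (hpos _) (hpos _)

lemma mu_step (hM : IsLC M) (j : ℕ) (hj : 1 ≤ j) :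
    seqQuot M j ≤ seqQuot M (j+1) := by
  obtain ⟨hpos, h0, h1, hlc, -⟩ := hM
  rw [mu_eq M (by omega), mu_eq M (by omega)]
  simp only [Nat.add_sub_cancel]
  rw [div_le_div_iff₀ (hpos _) (hpos _)]
  have := hlc j hj
  nlinarith [hpos (j-1), hpos j, hpos (j+1)]

lemma mu_mono (hM : IsLC M) {j k : ℕ} (hj : 1 ≤ j) (hjk : j ≤ k) :
    seqQuot M j ≤ seqQuot M k := by
  induction k, hjk using Nat.le_induction with
  | base => exact le_refl _
  | succ n hn ih => exact ih.trans (mu_step hM n (le_trans hj hn))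

lemma one_le_mu (hM : IsLC M) {j : ℕ} (hj : 1 ≤ j) : 1 ≤ seqQuot M j := by
  have h1 : seqQuot M 1 = M 1 := by
    rw [mu_eq M one_ne_zero]; norm_num [hM.2.1]
  have := mu_mono hM le_rfl hj
  rw [h1] at this
  exact le_trans hM.2.2.1 this

lemma M_succ (hM : IsLC M) (p : ℕ) : M (p+1) = seqQuot M (p+1) * M p := by
  rw [mu_eq M (Nat.succ_ne_zero p)]
  field_simp [(hM.1 p).ne']
  simp

lemma one_le_M (hM : IsLC M) (p : ℕ) : 1 ≤ M p := by
  induction p with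
  | zero => rw [hM.2.1]
  | succ n ih =>
      rw [M_succ hM n]
      calc (1:ℝ) ≤ M n := ih
      _ ≤ seqQuot M (n+1) * M n :=
          le_mul_of_one_le_left (le_trans zero_le_one ih) (one_le_mu hM (by omega))

lemma chainA (hM : IsLC M) {m : ℕ} (hm : 1 ≤ m) (k : ℕ) :
    (seqQuot M m)^k * M m ≤ M (m + k) := by
  induction k with
  | zero => simp
  | succ n ih =>
      have hs := mu_pos hM m
      calc (seqQuot M m)^(n+1) * M m = seqQuot M m * ((seqQuot M m)^n * M m) := by ring
      _ ≤ seqQuot M m * M (m + n) :=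
          mul_le_mul_of_nonneg_left ih hs.le
      _ ≤ seqQuot M (m + n + 1) * M (m + n) :=
          mul_le_mul_of_nonneg_right (mu_mono hM hm (by omega)) (hM.1 _).le
      _ = M (m + (n+1)) := (M_succ hM (m+n)).symm

lemma chainB (hM : IsLC M) (m : ℕ) : ∀ j, j ≤ m → M m ≤ (seqQuot M m)^j * M (m - j) := by
  intro j
  induction j with
  | zero => intro _; simp
  | succ n ih =>
      intro hnm
      have h1 : 1 ≤ m - n := by omega
      have key : M (m - n) ≤ seqQuot M m * M (m - (n+1)) := by
        have : M (m - n) = seqQuot M (m - n) * M (m - n - 1) := by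
          have e : m - n = (m - n - 1) + 1 := by omega
          rw [e, M_succ hM (m - n - 1)]
          simp
        rw [this]
        have : m - n - 1 = m - (n+1) := by omega
        rw [this]
        exact mul_le_mul_of_nonneg_right (mu_mono hM h1 (by omega)) (hM.1 _).le
      calc M m ≤ (seqQuot M m)^n * M (m - n) := ih (by omega)
      _ ≤ (seqQuot M m)^n * (seqQuot M m * M (m - (n+1))) :=
          mul_le_mul_of_nonneg_left key (pow_nonneg (mu_pos hM m).le n)
      _ = (seqQuot M m)^(n+1) * M (m - (n+1)) := by ring

lemma chain (hM : IsLC M) {m : ℕ} (hm : 1 ≤ m) (q : ℕ) :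
    (seqQuot M m)^q * M m ≤ (seqQuot M m)^m * M q := by
  rcases le_or_gt m q with h | h
  · have := chainA hM hm (q - m)
    have hq : m + (q - m) = q := by omega
    rw [hq] at this
    calc (seqQuot M m)^q * M m = (seqQuot M m)^m * ((seqQuot M m)^(q-m) * M m) := by
          rw [← mul_assoc, ← pow_add]; congr 2; omega
    _ ≤ (seqQuot M m)^m * M q :=
          mul_le_mul_of_nonneg_left this (pow_nonneg (mu_pos hM m).le m)
  · have := chainB hM m (m - q) (by omega)
    have hq : m - (m - q) = q := by omega
    rw [hq] at this
    calc (seqQuot M m)^q * M m ≤ (seqQuot M m)^q * ((seqQuot M m)^(m-q) * M q) :=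
          mul_le_mul_of_nonneg_left this (pow_nonneg (mu_pos hM m).le q)
    _ = (seqQuot M m)^m * M q := by
          rw [← mul_assoc, ← pow_add]; congr 2; omega

lemma pow_root_mono (hM : IsLC M) {n n' : ℕ} (hn : 1 ≤ n) (h : n ≤ n') :
    (M n) ^ ((n:ℝ)⁻¹) ≤ (M n') ^ ((n':ℝ)⁻¹) := by
  set s := seqQuot M n with hs
  have hsp := mu_pos hM n
  have hMn := hM.1 n
  have hMn' := hM.1 n'
  have hMs : M n ≤ s ^ n := by
    have := chainB hM n n le_rfl
    simpa [hM.2.1] using this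
  have hA : s^(n'-n) * M n ≤ M n' := by
    have := chainA hM hn (n' - n)
    have hq : n + (n' - n) = n' := by omega
    rwa [hq] at this
  have key : (M n)^n' ≤ (M n')^n := by
    calc (M n)^n' = (M n)^(n'-n) * (M n)^n := by rw [← pow_add]; congr 1; omega
    _ ≤ (s^n)^(n'-n) * (M n)^n :=
        mul_le_mul_of_nonneg_right (pow_le_pow_left₀ hMn.le hMs _) (pow_nonneg hMn.le n)
    _ = (s^(n'-n))^n * (M n)^n := by rw [← pow_mul, ← pow_mul, Nat.mul_comm]
    _ = (s^(n'-n) * M n)^n := (mul_pow _ _ n).symm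
    _ ≤ (M n')^n := pow_le_pow_left₀ (by positivity) hA n
  have hnR : (0:ℝ) < (n:ℝ) := by exact_mod_cast hn
  have hn'R : (0:ℝ) < (n':ℝ) := by exact_mod_cast (lt_of_lt_of_le hn h : 1 ≤ n')
  have h2 := Real.rpow_le_rpow (by positivity) key (by positivity : (0:ℝ) ≤ ((n:ℝ)*(n':ℝ))⁻¹)
  rw [← Real.rpow_natCast (M n) n', ← Real.rpow_natCast (M n') n,
    ← Real.rpow_mul hMn.le, ← Real.rpow_mul hMn'.le] at h2
  have e1 : (n':ℝ) * ((n:ℝ)*(n':ℝ))⁻¹ = (n:ℝ)⁻¹ := by field_simp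
  have e2 : (n:ℝ) * ((n:ℝ)*(n':ℝ))⁻¹ = (n':ℝ)⁻¹ := by field_simp
  rwa [e1, e2] at h2

lemma one_le_tilde (hM : IsLC M) (a p : ℕ) : 1 ≤ tildeSeq M a p := by
  unfold tildeSeq
  calc (1:ℝ) = 1 ^ ((a:ℝ)⁻¹) := (Real.one_rpow _).symm
  _ ≤ (M (a*p)) ^ ((a:ℝ)⁻¹) := Real.rpow_le_rpow zero_le_one (one_le_M hM _) (by positivity)

lemma tilde_mono (hM : IsLC M) {a a' : ℕ} (ha : 0 < a) (h : a ≤ a') (p : ℕ) :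
    tildeSeq M a p ≤ tildeSeq M a' p := by
  rcases eq_or_ne p 0 with rfl | hp
  · simp [tildeSeq, hM.2.1]
  · have ha' : 0 < a' := lt_of_lt_of_le ha h
    have hn : 1 ≤ a * p := Nat.one_le_iff_ne_zero.2 (Nat.mul_ne_zero ha.ne' hp)
    have hroot := pow_root_mono hM hn (Nat.mul_le_mul_right p h)
    have h2 := Real.rpow_le_rpow (Real.rpow_nonneg (hM.1 _).le _) hroot
      (by positivity : (0:ℝ) ≤ (p:ℝ))
    rw [← Real.rpow_mul (hM.1 _).le, ← Real.rpow_mul (hM.1 _).le] at h2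
    have hpR : (0:ℝ) < (p:ℝ) := by exact_mod_cast Nat.pos_of_ne_zero hp
    have e1 : ((a*p : ℕ):ℝ)⁻¹ * (p:ℝ) = (a:ℝ)⁻¹ := by
      push_cast
      field_simp
    have e2 : ((a'*p : ℕ):ℝ)⁻¹ * (p:ℝ) = (a':ℝ)⁻¹ := by
      push_cast
      field_simp
    rwa [e1, e2] at h2

lemma bddAbove_of_eventually_le (f : ℕ → ℝ) (N : ℕ) (c : ℝ) (h : ∀ p, N ≤ p → f p ≤ c) :
    BddAbove (Set.range f) := by
  refine ⟨max c (((Finset.range (N+1)).image f).max' (by simp)), ?_⟩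
  rintro x ⟨p, rfl⟩
  rcases le_or_gt N p with hp | hp
  · exact le_max_of_le_left (h p hp)
  · exact le_max_of_le_right (Finset.le_max' _ _
      (Finset.mem_image.2 ⟨p, Finset.mem_range.2 (by omega), rfl⟩))

lemma bddAbove_aux {Q : ℕ → ℝ} (hQpos : ∀ p, 0 < Q p)
    (hQ : Filter.Tendsto (fun p : ℕ => (Q p) ^ ((p : ℝ)⁻¹)) Filter.atTop Filter.atTop)
    {P : ℕ → ℝ} (hP : ∀ p, Q p ≤ P p) {t : ℝ} (ht : 0 ≤ t) :
    BddAbove (Set.range fun p : ℕ => Real.log (t^p / P p)) := by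
  obtain ⟨N, hN⟩ := Filter.eventually_atTop.1 (hQ.eventually_ge_atTop (t+1))
  refine bddAbove_of_eventually_le _ (max N 1) 0 ?_
  intro p hp
  have hp1 : 1 ≤ p := le_trans (le_max_right N 1) hp
  have hPp : 0 < P p := lt_of_lt_of_le (hQpos p) (hP p)
  have htp : t^p ≤ P p := by
    have h1 : t + 1 ≤ (Q p) ^ ((p:ℝ)⁻¹) := hN p (le_trans (le_max_left N 1) hp)
    have h2 : (t+1)^p ≤ ((Q p) ^ ((p:ℝ)⁻¹))^p :=
      pow_le_pow_left₀ (by linarith) h1 p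
    have hp0 : ((p:ℕ):ℝ) ≠ 0 := by
      have : p ≠ 0 := by omega
      exact_mod_cast this
    have h3 : ((Q p) ^ ((p:ℝ)⁻¹))^p = Q p := by
      rw [← Real.rpow_natCast ((Q p) ^ ((p:ℝ)⁻¹)) p, ← Real.rpow_mul (hQpos p).le,
        inv_mul_cancel₀ hp0, Real.rpow_one]
    calc t^p ≤ (t+1)^p := pow_le_pow_left₀ ht (by linarith) p
    _ ≤ Q p := by rw [← h3]; exact h2
    _ ≤ P p := hP p
  exact Real.log_nonpos (by positivity) ((div_le_one hPp).2 htp)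



lemma le_omegaM {P : ℕ → ℝ} {t : ℝ}
    (hbdd : BddAbove (Set.range fun p : ℕ => Real.log (t^p / P p))) (p : ℕ) :
    Real.log (t^p / P p) ≤ omegaM P t := le_ciSup hbdd p

lemma omegaM_le {P : ℕ → ℝ} {t c : ℝ} (h : ∀ p : ℕ, Real.log (t^p / P p) ≤ c) :
    omegaM P t ≤ c := ciSup_le h

variable {M N L : ℕ → ℝ}

lemma bddL (hL : IsLC L) {t : ℝ} (ht : 0 ≤ t) :
    BddAbove (Set.range fun p : ℕ => Real.log (t^p / L p)) :=
  bddAbove_aux hL.1 hL.2.2.2.2 (fun _ => le_rfl) ht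

lemma Ppos (hM : IsLC M) (hN : IsLC N) (a p : ℕ) : 0 < N p * tildeSeq M a p :=
  mul_pos (hN.1 p) (lt_of_lt_of_le one_pos (one_le_tilde hM a p))

lemma bddP (hM : IsLC M) (hN : IsLC N) (a : ℕ) {t : ℝ} (ht : 0 ≤ t) :
    BddAbove (Set.range fun p : ℕ => Real.log (t^p / (N p * tildeSeq M a p))) :=
  bddAbove_aux hN.1 hN.2.2.2.2
    (fun p => le_mul_of_one_le_right (hN.1 p).le (one_le_tilde hM a p)) ht

lemma forward (hM : IsLC M) (hN : IsLC N) (hL : IsLC L) {a : ℕ} (ha : 0 < a)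
    (h : S11P1 M N L a) : S11P2 M N L a := by
  obtain ⟨B, hB1, hB⟩ := h
  have hB0 : (0:ℝ) ≤ B := by linarith
  refine ⟨Real.sqrt B, Real.one_le_sqrt.2 hB1, 0, le_rfl, fun t ht => ?_⟩
  rw [add_zero]
  have hbddL : BddAbove (Set.range fun p : ℕ =>
      Real.log ((Real.sqrt B * t)^p / L p)) := bddL hL (by positivity)
  refine omegaM_le fun p => ?_
  have hPp : 0 < N p * tildeSeq M a p := Ppos hM hN a p
  have key : L (2*p) ≤ B^p * (N p * tildeSeq M a p) := by
    simpa [tildeSeq, mul_assoc] using hB p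
  rcases ht.eq_or_lt with rfl | htpos
  · have hω0 : 0 ≤ omegaM L (Real.sqrt B * 0) := by
      have h0 := le_omegaM hbddL 0
      simpa [hL.2.1] using h0
    have hterm : Real.log (((0:ℝ)^2)^p / (N p * tildeSeq M a p)) ≤ 0 := by
      rcases Nat.eq_zero_or_pos p with rfl | hp
      · simp [tildeSeq, hN.2.1, hM.2.1]
      · have h0 : ((0:ℝ)^2)^p = 0 := by
          rw [zero_pow (by norm_num : (2:ℕ) ≠ 0), zero_pow hp.ne']
        rw [h0, zero_div, Real.log_zero]
    linarith
  · have hBt : (Real.sqrt B * t)^(2*p) = B^p * t^(2*p) := by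
      rw [mul_pow, pow_mul, Real.sq_sqrt hB0]
    have hlt : (t^2)^p / (N p * tildeSeq M a p) ≤ (Real.sqrt B * t)^(2*p) / L (2*p) := by
      rw [div_le_div_iff₀ hPp (hL.1 _), hBt, ← pow_mul]
      calc t^(2*p) * L (2*p) ≤ t^(2*p) * (B^p * (N p * tildeSeq M a p)) :=
            mul_le_mul_of_nonneg_left key (pow_nonneg ht (2*p))
      _ = B^p * t^(2*p) * (N p * tildeSeq M a p) := by ring
    calc Real.log ((t^2)^p / (N p * tildeSeq M a p))
        ≤ Real.log ((Real.sqrt B * t)^(2*p) / L (2*p)) :=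
          Real.log_le_log (div_pos (by positivity) hPp) hlt
    _ ≤ omegaM L (Real.sqrt B * t) := le_omegaM hbddL (2*p)

lemma backward (hM : IsLC M) (hN : IsLC N) (hL : IsLC L) {a : ℕ} (ha : 0 < a)
    (h : S11P2 M N L a) : S11P1 M N L a := by
  obtain ⟨A, hA1, C, hC0, hcond⟩ := h
  have hApos : 0 < A := lt_of_lt_of_le one_pos hA1
  have hexpC : 1 ≤ Real.exp C := Real.one_le_exp hC0
  refine ⟨A^2 * Real.exp C, by nlinarith, fun p => ?_⟩
  rcases Nat.eq_zero_or_pos p with rfl | hp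
  · simp [hL.2.1, hN.2.1, hM.2.1]
  · set s := seqQuot L (2*p) with hsdef
    have hm : 1 ≤ 2*p := by omega
    have hs1 : 1 ≤ s := one_le_mu hL hm
    have hspos : 0 < s := lt_of_lt_of_le one_pos hs1
    set t := s / A with htdef
    have htpos : 0 < t := div_pos hspos hApos
    have hAt : A * t = s := by rw [htdef]; field_simp
    have hPp : 0 < N p * tildeSeq M a p := Ppos hM hN a p
    have hωL : omegaM L s ≤ (2*p : ℕ) * Real.log s - Real.log (L (2*p)) := by
      refine omegaM_le fun q => ?_
      have hcq := chain hL hm q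
      have hdiv : s^q / L q ≤ s^(2*p) / L (2*p) := by
        rw [div_le_div_iff₀ (hL.1 q) (hL.1 (2*p))]
        exact hcq
      calc Real.log (s^q / L q) ≤ Real.log (s^(2*p) / L (2*p)) :=
            Real.log_le_log (div_pos (by positivity) (hL.1 q)) hdiv
      _ = (2*p:ℕ) * Real.log s - Real.log (L (2*p)) := by
            rw [Real.log_div (by positivity) (hL.1 _).ne', Real.log_pow]
    have hωP : (2*p:ℕ) * Real.log t - Real.log (N p * tildeSeq M a p)
        ≤ omegaM (fun q => N q * tildeSeq M a q) (t^2) := by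
      have h1 := le_omegaM (P := fun q => N q * tildeSeq M a q)
        (bddP hM hN a (by positivity : (0:ℝ) ≤ t^2)) p
      have h2 : Real.log ((t^2)^p / (N p * tildeSeq M a p))
          = (2*p:ℕ) * Real.log t - Real.log (N p * tildeSeq M a p) := by
        rw [Real.log_div (by positivity) hPp.ne', ← pow_mul, Real.log_pow]
      rw [h2] at h1
      exact h1
    have hmain := hcond t htpos.le
    rw [hAt] at hmain
    have hlogt : Real.log t = Real.log s - Real.log A := by
      rw [htdef, Real.log_div hspos.ne' hApos.ne']
    rw [hlogt] at hωP
    have hfinal : Real.log (L (2*p)) ≤ Real.log (N p * tildeSeq M a p)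
        + (2*p:ℕ) * Real.log A + C := by linarith
    push_cast at hfinal
    have hCp : C ≤ (p:ℝ) * C :=
      le_mul_of_one_le_left hC0 (by exact_mod_cast hp)
    have hlogB : Real.log (L (2*p)) ≤ Real.log (N p * tildeSeq M a p)
        + (p:ℝ) * (2 * Real.log A + C) := by nlinarith [hfinal, hCp]
    have hexp : Real.exp ((p:ℝ) * (2 * Real.log A + C)) = (A^2 * Real.exp C)^p := by
      have e1 : (2:ℝ) * Real.log A + C = Real.log (A^2 * Real.exp C) := by
        rw [Real.log_mul (by positivity) (Real.exp_pos C).ne', Real.log_exp,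
          Real.log_pow]
        push_cast; ring
      rw [e1, Real.exp_nat_mul, Real.exp_log (by positivity)]
    have hcon : L (2*p) ≤ (N p * tildeSeq M a p) * (A^2 * Real.exp C)^p := by
      have h3 := Real.exp_le_exp.2 hlogB
      rw [Real.exp_log (hL.1 _), Real.exp_add, Real.exp_log hPp, hexp] at h3
      exact h3
    calc L (2*p) ≤ (N p * tildeSeq M a p) * (A^2 * Real.exp C)^p := hcon
    _ = (A^2 * Real.exp C)^p * N p * (M (a*p)) ^ ((a:ℝ)⁻¹) := by
        simp only [tildeSeq]; ring

end Stmt11Aux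

open Stmt11Aux in
theorem stmt11 (M N L : ℕ → ℝ) (hM : IsLC M) (hN : IsLC N) (hL : IsLC L) :
    ((∃ a : ℕ, 0 < a ∧ S11P1 M N L a) ↔ (∃ a : ℕ, 0 < a ∧ S11P2 M N L a)) ∧
    (∀ a : ℕ, 0 < a → (S11P1 M N L a ↔ S11P2 M N L a)) ∧
    (∀ a a' : ℕ, 0 < a → a ≤ a' → S11P2 M N L a → S11P2 M N L a') := by
  refine ⟨⟨?_, ?_⟩, fun a ha => ⟨fun h => forward hM hN hL ha h,
      fun h => backward hM hN hL ha h⟩, ?_⟩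
  · rintro ⟨a, ha, h⟩; exact ⟨a, ha, forward hM hN hL ha h⟩
  · rintro ⟨a, ha, h⟩; exact ⟨a, ha, backward hM hN hL ha h⟩
  · intro a a' ha haa' h2
    have ha' : 0 < a' := lt_of_lt_of_le ha haa'
    obtain ⟨B, hB1, hB⟩ := backward hM hN hL ha h2
    refine forward hM hN hL ha' ⟨B, hB1, fun p => ?_⟩
    calc L (2*p) ≤ B^p * N p * (M (a*p)) ^ ((a:ℝ)⁻¹) := hB p
    _ ≤ B^p * N p * (M (a'*p)) ^ ((a':ℝ)⁻¹) := by
        have ht := tilde_mono hM ha haa' p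
        simp only [tildeSeq] at ht
        exact mul_le_mul_of_nonneg_left ht
          (mul_nonneg (pow_nonneg (by linarith) p) (hN.1 p).le)
end

section
/- Let M, N, L belong to the class LC. (i) If there exist A ≥ 1 and C ≥ 0 such that ω_{MN}(t²) ≤ ω_L(At) + C for all t ≥ 0 (MN the pointwise product), then for every a ∈ ℕ_{>0} one has ω_{N·M̃^a}(t²) ≤ ω_L(At) + C for all t ≥ 0 with the same parameters A, C. (ii) Conversely, if there exist a ∈ ℕ_{>0}, A ≥ 1 and C ≥ 0 such that ω_{N·M̃^a}(t²) ≤ ω_L(At) + C for all t ≥ 0, then there exist a' ∈ ℕ_{>0} (one may take a' = 2a), A ≥ 1 and B ≥ 0 such that ω_{MN}(t²) ≤ a'·ω_L(At) + B for all t ≥ 0. -/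
open Real Filter Set

section Helpers

variable {M : ℕ → ℝ}

lemma log_div_mono (x : ℝ) (hx : 0 ≤ x) {P Q : ℝ} (hP : 0 < P) (hPQ : P ≤ Q) :
    Real.log (x / Q) ≤ Real.log (x / P) := by
  rcases eq_or_lt_of_le hx with h | h
  · rw [← h]; simp
  · exact Real.log_le_log (div_pos h (hP.trans_le hPQ))
      (div_le_div_of_nonneg_left h.le hP hPQ)

lemma bddAbove_of_le' {f g : ℕ → ℝ} (h : ∀ p, g p ≤ f p) (hf : BddAbove (Set.range f)) :
    BddAbove (Set.range g) := by
  obtain ⟨c, hc⟩ := hf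
  refine ⟨c, ?_⟩
  rintro x ⟨p, rfl⟩
  exact (h p).trans (hc ⟨p, rfl⟩)

namespace IsLC

variable (hM : IsLC M)
include hM

lemma pos : ∀ p, 0 < M p := hM.1
lemma zero : M 0 = 1 := hM.2.1
lemma one : 1 ≤ M 1 := hM.2.2.1

lemma ratio_mono : Monotone (fun p => M (p + 1) / M p) := by
  apply monotone_nat_of_le_succ
  intro p
  have h := hM.2.2.2.1 (p + 1) (by omega)
  simp only [Nat.add_sub_cancel] at h
  have h0 := hM.1 p
  have h1 := hM.1 (p + 1)
  have h2 := hM.1 (p + 2)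
  rw [div_le_div_iff₀ h0 h1]
  nlinarith

lemma one_le_ratio (p : ℕ) : 1 ≤ M (p + 1) / M p := by
  have h0 : (1 : ℝ) ≤ M 1 / M 0 := by rw [hM.zero]; simpa using hM.one
  exact h0.trans (hM.ratio_mono (Nat.zero_le p))

lemma mono : Monotone M := by
  apply monotone_nat_of_le_succ
  intro p
  have h := hM.one_le_ratio p
  rw [le_div_iff₀ (hM.pos p)] at h
  linarith

lemma one_le (p : ℕ) : 1 ≤ M p := hM.zero ▸ hM.mono (Nat.zero_le p)

lemma superadd : ∀ p q : ℕ, M p * M q ≤ M (p + q) := by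
  intro p
  induction p with
  | zero => intro q; simp [hM.zero]
  | succ p ih =>
    intro q
    have hp := hM.pos p
    have hpq := hM.pos (p + q)
    have hp1 := hM.pos (p + 1)
    calc M (p + 1) * M q = (M (p + 1) / M p) * (M p * M q) := by field_simp
      _ ≤ (M (p + 1) / M p) * M (p + q) := by
          apply mul_le_mul_of_nonneg_left (ih q)
          positivity
      _ ≤ (M (p + q + 1) / M (p + q)) * M (p + q) := by
          apply mul_le_mul_of_nonneg_right (hM.ratio_mono (Nat.le_add_right p q)) hpq.le
      _ = M (p + q + 1) := by field_simp
      _ = M (p + 1 + q) := by congr 1; omega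

lemma pow_le (k p : ℕ) : (M p) ^ k ≤ M (k * p) := by
  induction k with
  | zero => simp [hM.zero]
  | succ k ih =>
    calc (M p) ^ (k + 1) = (M p) ^ k * M p := pow_succ _ _
      _ ≤ M (k * p) * M p := mul_le_mul_of_nonneg_right ih (hM.pos p).le
      _ ≤ M (k * p + p) := hM.superadd _ _
      _ = M ((k + 1) * p) := by congr 1; ring

lemma bdd {s : ℝ} (hs : 0 ≤ s) :
    BddAbove (Set.range fun p : ℕ => Real.log (s ^ p / M p)) := by
  have hev : ∀ᶠ p : ℕ in atTop, s + 1 ≤ (M p) ^ ((p : ℝ)⁻¹) :=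
    hM.2.2.2.2.eventually_ge_atTop (s + 1)
  obtain ⟨P, hP⟩ := eventually_atTop.mp hev
  refine ⟨∑ i ∈ Finset.range (P + 1), |Real.log (s ^ i / M i)|, ?_⟩
  rintro x ⟨p, rfl⟩
  by_cases hp : p ≤ P
  · calc Real.log (s ^ p / M p) ≤ |Real.log (s ^ p / M p)| := le_abs_self _
      _ ≤ _ := Finset.single_le_sum (f := fun i => |Real.log (s ^ i / M i)|)
          (fun i _ => abs_nonneg _) (Finset.mem_range.mpr (by omega))
  · push_neg at hp
    have hp0 : (p : ℝ) ≠ 0 := Nat.cast_ne_zero.mpr (by omega)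
    have h1 : s + 1 ≤ (M p) ^ ((p : ℝ)⁻¹) := hP p (by omega)
    have hMp : ((M p) ^ ((p : ℝ)⁻¹)) ^ (p : ℕ) = M p := by
      rw [← Real.rpow_natCast ((M p) ^ ((p : ℝ)⁻¹)) p, ← Real.rpow_mul (hM.pos p).le,
        inv_mul_cancel₀ hp0, Real.rpow_one]
    have h2 : s ^ p ≤ M p := by
      calc s ^ p ≤ (s + 1) ^ p := pow_le_pow_left₀ hs (by linarith) p
        _ ≤ ((M p) ^ ((p : ℝ)⁻¹)) ^ (p : ℕ) := pow_le_pow_left₀ (by linarith) h1 p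
        _ = M p := hMp
    have h3 : Real.log (s ^ p / M p) ≤ 0 :=
      Real.log_nonpos (div_nonneg (pow_nonneg hs p) (hM.pos p).le)
      (div_le_one_of_le₀ h2 (hM.pos p).le)
    calc Real.log (s ^ p / M p) ≤ 0 := h3
      _ ≤ _ := Finset.sum_nonneg fun i _ => abs_nonneg _

end IsLC

lemma term_le_omegaM {P : ℕ → ℝ} {s : ℝ}
    (hb : BddAbove (Set.range fun p : ℕ => Real.log (s ^ p / P p))) (p : ℕ) :
    Real.log (s ^ p / P p) ≤ omegaM P s :=
  le_ciSup hb p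

lemma omegaM_nonneg {P : ℕ → ℝ} {s : ℝ} (h0 : P 0 = 1)
    (hb : BddAbove (Set.range fun p : ℕ => Real.log (s ^ p / P p))) :
    0 ≤ omegaM P s := by
  have h := term_le_omegaM hb 0
  simpa [h0] using h

end Helpers

section Main

lemma tilde_pos {M : ℕ → ℝ} (hM : IsLC M) (a p : ℕ) : 0 < tildeSeq M a p :=
  Real.rpow_pos_of_pos (hM.pos _) _

lemma tilde_ge {M : ℕ → ℝ} (hM : IsLC M) {a : ℕ} (ha : 0 < a) (p : ℕ) :
    M p ≤ tildeSeq M a p := by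
  have ha0 : ((a : ℝ)) ≠ 0 := Nat.cast_ne_zero.mpr ha.ne'
  have h1 : (M p) ^ a ≤ M (a * p) := hM.pow_le a p
  have h2 : ((M p) ^ a) ^ ((a : ℝ)⁻¹) ≤ (M (a * p)) ^ ((a : ℝ)⁻¹) :=
    Real.rpow_le_rpow (pow_nonneg (hM.pos p).le a) h1 (by positivity)
  calc M p = ((M p) ^ a) ^ ((a : ℝ)⁻¹) := by
        rw [← Real.rpow_natCast (M p) a, ← Real.rpow_mul (hM.pos p).le,
          mul_inv_cancel₀ ha0, Real.rpow_one]
    _ ≤ tildeSeq M a p := h2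

theorem stmt14 (M N L : ℕ → ℝ) (hM : IsLC M) (hN : IsLC N) (hL : IsLC L) :
    (∀ A C : ℝ, 1 ≤ A → 0 ≤ C →
      (∀ t : ℝ, 0 ≤ t → omegaM (fun p => M p * N p) (t ^ 2) ≤ omegaM L (A * t) + C) →
      ∀ a : ℕ, 0 < a → ∀ t : ℝ, 0 ≤ t →
        omegaM (fun p => N p * tildeSeq M a p) (t ^ 2) ≤ omegaM L (A * t) + C) ∧
    (∀ a : ℕ, 0 < a →
      (∃ A : ℝ, 1 ≤ A ∧ ∃ C : ℝ, 0 ≤ C ∧ ∀ t : ℝ, 0 ≤ t →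
        omegaM (fun p => N p * tildeSeq M a p) (t ^ 2) ≤ omegaM L (A * t) + C) →
      ∃ A : ℝ, 1 ≤ A ∧ ∃ B : ℝ, 0 ≤ B ∧ ∀ t : ℝ, 0 ≤ t →
        omegaM (fun p => M p * N p) (t ^ 2) ≤
          (2 * (a : ℝ)) * omegaM L (A * t) + B) := by
  constructor
  · -- part (i)
    intro A C hA hC h a ha t ht
    have hMN_bdd : BddAbove (Set.range fun p : ℕ =>
        Real.log ((t ^ 2) ^ p / (M p * N p))) := by
      refine bddAbove_of_le' (f := fun p => Real.log ((t ^ 2) ^ p / M p)) ?_ (hM.bdd (sq_nonneg t))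
      intro p
      exact log_div_mono _ (pow_nonneg (sq_nonneg t) p) (hM.pos p)
        (le_mul_of_one_le_right (hM.pos p).le (hN.one_le p))
    refine ciSup_le fun p => ?_
    have h1 : Real.log ((t ^ 2) ^ p / (N p * tildeSeq M a p)) ≤
        Real.log ((t ^ 2) ^ p / (M p * N p)) := by
      refine log_div_mono _ (pow_nonneg (sq_nonneg t) p) (mul_pos (hM.pos p) (hN.pos p)) ?_
      calc M p * N p = N p * M p := mul_comm _ _
        _ ≤ N p * tildeSeq M a p :=
            mul_le_mul_of_nonneg_left (tilde_ge hM ha p) (hN.pos p).le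
    calc Real.log ((t ^ 2) ^ p / (N p * tildeSeq M a p))
        ≤ Real.log ((t ^ 2) ^ p / (M p * N p)) := h1
      _ ≤ omegaM (fun p => M p * N p) (t ^ 2) := term_le_omegaM hMN_bdd p
      _ ≤ omegaM L (A * t) + C := h t ht
  · -- part (ii)
    intro a ha h
    obtain ⟨A, hA, C, hC, h⟩ := h
    have ha0 : ((a : ℝ)) ≠ 0 := Nat.cast_ne_zero.mpr ha.ne'
    have haR : (0 : ℝ) < a := Nat.cast_pos.mpr ha
    set c1 : ℝ := Real.log (N 1) + (a : ℝ)⁻¹ * Real.log (M a) with hc1def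
    clear_value c1
    have hc1 : 0 ≤ c1 := by
      rw [hc1def]
      exact add_nonneg (Real.log_nonneg (hN.one_le 1))
        (mul_nonneg (by positivity) (Real.log_nonneg (hM.one_le a)))
    refine ⟨A, hA, 2 * (a : ℝ) * C + (a : ℝ) * c1,
      add_nonneg (mul_nonneg (by positivity) hC) (mul_nonneg haR.le hc1), fun t ht => ?_⟩
    have hAt : 0 ≤ A * t := mul_nonneg (by linarith) ht
    have hLbdd := hL.bdd hAt
    have hωL : 0 ≤ omegaM L (A * t) := omegaM_nonneg hL.zero hLbdd
    rcases lt_or_ge t 1 with h1 | h1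
    · -- 0 ≤ t < 1 : left side is ≤ 0, right side ≥ 0
      have hle : omegaM (fun p => M p * N p) (t ^ 2) ≤ 0 := by
        refine ciSup_le fun p => ?_
        refine Real.log_nonpos
          (div_nonneg (pow_nonneg (sq_nonneg t) p) (mul_pos (hM.pos p) (hN.pos p)).le) ?_
        refine div_le_one_of_le₀ ?_ (mul_pos (hM.pos p) (hN.pos p)).le
        calc (t ^ 2) ^ p ≤ 1 ^ p := pow_le_pow_left₀ (sq_nonneg t) (by nlinarith) p
          _ = 1 := one_pow p
          _ ≤ M p * N p := one_le_mul_of_one_le_of_one_le (hM.one_le p) (hN.one_le p)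
      have h2 : 0 ≤ 2 * (a : ℝ) * omegaM L (A * t) := mul_nonneg (by positivity) hωL
      have h3 : 0 ≤ 2 * (a : ℝ) * C := mul_nonneg (by positivity) hC
      have h4 : 0 ≤ (a : ℝ) * c1 := mul_nonneg haR.le hc1
      linarith
    · -- 1 ≤ t
      have ht0 : (0 : ℝ) < t := lt_of_lt_of_le one_pos h1
      have hT : 0 ≤ Real.log t := Real.log_nonneg h1
      have ht2 : (0 : ℝ) ≤ t ^ 2 := sq_nonneg t
      have htne : ((t : ℝ) ^ 2) ≠ 0 := pow_ne_zero 2 ht0.ne'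
      have hPpos : ∀ p, 0 < N p * tildeSeq M a p :=
        fun p => mul_pos (hN.pos p) (tilde_pos hM a p)
      have hPge : ∀ p, M p ≤ N p * tildeSeq M a p := fun p =>
        le_trans (tilde_ge hM ha p)
          (le_mul_of_one_le_left (tilde_pos hM a p).le (hN.one_le p))
      have hPbdd : BddAbove (Set.range fun p : ℕ =>
          Real.log ((t ^ 2) ^ p / (N p * tildeSeq M a p))) :=
        bddAbove_of_le' (fun p => log_div_mono _ (pow_nonneg ht2 p) (hM.pos p) (hPge p))
          (hM.bdd ht2)
      have hP0 : N 0 * tildeSeq M a 0 = 1 := by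
        simp [tildeSeq, hN.zero, hM.zero]
      have hω0 : 0 ≤ omegaM (fun p => N p * tildeSeq M a p) (t ^ 2) :=
        omegaM_nonneg hP0 hPbdd
      have hωle : omegaM (fun p => N p * tildeSeq M a p) (t ^ 2) ≤ omegaM L (A * t) + C :=
        h t ht
      set ω : ℝ := omegaM (fun p => N p * tildeSeq M a p) (t ^ 2) with hωdef
      clear_value ω
      refine ciSup_le fun p => ?_
      show Real.log ((t ^ 2) ^ p / (M p * N p)) ≤
        2 * (a : ℝ) * omegaM L (A * t) + (2 * (a : ℝ) * C + (a : ℝ) * c1)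
      set q : ℕ := p / a with hqdef
      set r : ℕ := p % a with hrdef
      have hqr : p = a * q + r := (Nat.div_add_mod p a).symm
      have hra : r < a := Nat.mod_lt p ha
      clear_value q r
      have hqrR : (p : ℝ) = (a : ℝ) * (q : ℝ) + (r : ℝ) := by exact_mod_cast hqr
      have hraR : (r : ℝ) ≤ (a : ℝ) := by exact_mod_cast hra.le
      have hr0 : (0 : ℝ) ≤ (r : ℝ) := Nat.cast_nonneg r
      have hyq : Real.log ((t ^ 2) ^ q / (N q * tildeSeq M a q)) ≤ ω := by
        rw [hωdef]; exact term_le_omegaM hPbdd q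
      have hy1 : Real.log ((t ^ 2) ^ 1 / (N 1 * tildeSeq M a 1)) ≤ ω := by
        rw [hωdef]; exact term_le_omegaM hPbdd 1
      have e1 : Real.log ((t ^ 2) ^ p / (M p * N p)) =
          2 * (p : ℝ) * Real.log t - Real.log (M p) - Real.log (N p) := by
        rw [Real.log_div (pow_ne_zero p htne) (mul_pos (hM.pos p) (hN.pos p)).ne',
          Real.log_mul (hM.pos p).ne' (hN.pos p).ne', Real.log_pow, Real.log_pow]
        push_cast; ring
      have e2 : Real.log ((t ^ 2) ^ q / (N q * tildeSeq M a q)) =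
          2 * (q : ℝ) * Real.log t - Real.log (N q) - (a : ℝ)⁻¹ * Real.log (M (a * q)) := by
        rw [Real.log_div (pow_ne_zero q htne) (hPpos q).ne',
          Real.log_mul (hN.pos q).ne' (tilde_pos hM a q).ne']
        rw [show tildeSeq M a q = (M (a * q)) ^ ((a : ℝ)⁻¹) from rfl,
          Real.log_rpow (hM.pos (a * q)), Real.log_pow, Real.log_pow]
        push_cast; ring
      have e3 : Real.log ((t ^ 2) ^ 1 / (N 1 * tildeSeq M a 1)) =
          2 * Real.log t - c1 := by
        rw [Real.log_div (pow_ne_zero 1 htne) (hPpos 1).ne',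
          Real.log_mul (hN.pos 1).ne' (tilde_pos hM a 1).ne']
        rw [show tildeSeq M a 1 = (M (a * 1)) ^ ((a : ℝ)⁻¹) from rfl,
          Real.log_rpow (hM.pos (a * 1)), Real.log_pow, Real.log_pow, hc1def, mul_one]
        push_cast; ring
      have f1 : Real.log (M (a * q)) ≤ Real.log (M p) :=
        Real.log_le_log (hM.pos _) (hM.mono (by omega : a * q ≤ p))
      have f2 : (a : ℝ) * Real.log (N q) ≤ Real.log (N p) := by
        have h2 : (N q) ^ a ≤ N p := (hN.pow_le a q).trans (hN.mono (by omega : a * q ≤ p))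
        have h3 := Real.log_le_log (pow_pos (hN.pos q) a) h2
        rwa [Real.log_pow] at h3
      have hinv : (a : ℝ) * ((a : ℝ)⁻¹ * Real.log (M (a * q))) = Real.log (M (a * q)) := by
        field_simp
      have key1 : Real.log ((t ^ 2) ^ p / (M p * N p)) ≤
          (a : ℝ) * Real.log ((t ^ 2) ^ q / (N q * tildeSeq M a q)) +
          (r : ℝ) * (Real.log ((t ^ 2) ^ 1 / (N 1 * tildeSeq M a 1)) + c1) := by
        rw [e1, e2, e3, hqrR]
        nlinarith [f1, f2, hinv]
      have g1 : (a : ℝ) * Real.log ((t ^ 2) ^ q / (N q * tildeSeq M a q)) ≤ (a : ℝ) * ω :=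
        mul_le_mul_of_nonneg_left hyq haR.le
      have g2 : (r : ℝ) * Real.log ((t ^ 2) ^ 1 / (N 1 * tildeSeq M a 1)) ≤ (r : ℝ) * ω :=
        mul_le_mul_of_nonneg_left hy1 hr0
      have g3 : (r : ℝ) * ω ≤ (a : ℝ) * ω := mul_le_mul_of_nonneg_right hraR hω0
      have g4 : (r : ℝ) * c1 ≤ (a : ℝ) * c1 := mul_le_mul_of_nonneg_right hraR hc1
      have g5 : 2 * (a : ℝ) * ω ≤ 2 * (a : ℝ) * (omegaM L (A * t) + C) :=
        mul_le_mul_of_nonneg_left hωle (by positivity)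
      linarith [key1, g1, g2, g3, g4, g5]

end Main
end

section
/- Let ω ∈ W₀ with associated weight matrix {W^(ℓ) : ℓ > 0} and quotient sequences ϑ^(ℓ). Then the following are equivalent: (i) there exist a ∈ ℕ_{>0}, A ≥ 1 and C ≥ 0 such that ω_{W^(1)·W^(a)}(t²) ≤ ω_{W^(1)}(At) + C for all t ≥ 0 (W^(1)·W^(a) the pointwise product); (ii) the matrix satisfies the Roumieu quotient-root comparison property: for every x > 0 there exist y > 0 and A ≥ 1 such that ϑ^(x)_p ≤ A·(W^(y)_p)^{1/p} for all p ≥ 1; (iii) the matrix satisfies the Beurling quotient-root comparison property: for every x > 0 there exist y > 0 and A ≥ 1 such that ϑ^(y)_p ≤ A·(W^(x)_p)^{1/p} for all p ≥ 1. -/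
open Real Filter Set

section AuxLemmas

variable {ω : ℝ → ℝ}

lemma omega_zero_of_le_one (hω : IsW0 ω) {t : ℝ} (h0 : 0 ≤ t) (h1 : t ≤ 1) : ω t = 0 :=
  hω.2.2.1 t ⟨h0, h1⟩

lemma phi_nonneg (hω : IsW0 ω) (y : ℝ) : 0 ≤ ω (Real.exp y) := by
  rcases le_or_gt (Real.exp y) 1 with h | h
  · rw [omega_zero_of_le_one hω (Real.exp_pos y).le h]
  · have h1 : ω 1 = 0 := omega_zero_of_le_one hω zero_le_one le_rfl
    have := hω.2.1 (by norm_num : (1:ℝ) ∈ Set.Ici (0:ℝ))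
      (Set.mem_Ici.2 (Real.exp_pos y).le) h.le
    linarith

/-- eventual linear lower bound on `φ(y) = ω (exp y)` -/
lemma phi_lin (hω : IsW0 ω) (c : ℝ) (hc : 0 < c) :
    ∃ y₀ : ℝ, 0 ≤ y₀ ∧ ∀ y : ℝ, y₀ ≤ y → c * y ≤ ω (Real.exp y) := by
  have hlo := hω.2.2.2.2.1
  rw [Asymptotics.isLittleO_iff] at hlo
  have h1 : ∀ᶠ t : ℝ in Filter.atTop, ‖Real.log t‖ ≤ c⁻¹ * ‖ω t‖ :=
    hlo (by positivity)
  have h2 : ∀ᶠ t : ℝ in Filter.atTop, (0:ℝ) ≤ ω t :=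
    hω.2.2.2.1.eventually_ge_atTop 0
  rcases ((h1.and h2).and (Filter.eventually_ge_atTop (1:ℝ))).exists_forall_of_atTop
    with ⟨T, hT⟩
  refine ⟨max (Real.log (max T 1)) 0 + 1, by positivity, fun y hy => ?_⟩
  have hy0 : 0 ≤ y := le_trans (by positivity) hy
  have hTy : T ≤ Real.exp y := by
    calc T ≤ max T 1 := le_max_left _ _
    _ = Real.exp (Real.log (max T 1)) :=
        (Real.exp_log (lt_of_lt_of_le one_pos (le_max_right _ _))).symm
    _ ≤ Real.exp y := Real.exp_le_exp.2 (le_trans (le_max_left _ _)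
        (le_trans (le_add_of_nonneg_right zero_le_one) hy))
  obtain ⟨⟨hb1, hb2⟩, _⟩ := hT (Real.exp y) hTy
  have hlog : Real.log (Real.exp y) = y := Real.log_exp y
  rw [hlog] at hb1
  have : ‖y‖ = y := Real.norm_of_nonneg hy0
  rw [this, Real.norm_of_nonneg hb2] at hb1
  calc c * y ≤ c * (c⁻¹ * ω (Real.exp y)) := by
        apply mul_le_mul_of_nonneg_left hb1 hc.le
  _ = ω (Real.exp y) := by field_simp

lemma phiStar_set_nonempty (ω : ℝ → ℝ) (x : ℝ) :
    {z : ℝ | ∃ y : ℝ, 0 ≤ y ∧ z = x * y - ω (Real.exp y)}.Nonempty :=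
  ⟨x * 0 - ω (Real.exp 0), 0, le_rfl, rfl⟩

lemma phiStar_bddAbove (hω : IsW0 ω) {x : ℝ} (hx : 0 ≤ x) :
    BddAbove {z : ℝ | ∃ y : ℝ, 0 ≤ y ∧ z = x * y - ω (Real.exp y)} := by
  obtain ⟨y₀, hy₀, hlin⟩ := phi_lin hω (x + 1) (by linarith)
  refine ⟨x * y₀, ?_⟩
  rintro z ⟨y, hy, rfl⟩
  rcases le_or_gt y y₀ with h | h
  · have := phi_nonneg hω y
    nlinarith
  · have := hlin y h.le
    nlinarith

lemma le_phiStar (hω : IsW0 ω) {x : ℝ} (hx : 0 ≤ x) {y : ℝ} (hy : 0 ≤ y) :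
    x * y - ω (Real.exp y) ≤ phiStar ω x :=
  le_csSup (phiStar_bddAbove hω hx) ⟨y, hy, rfl⟩

lemma phiStar_le {M x : ℝ} (h : ∀ y : ℝ, 0 ≤ y → x * y - ω (Real.exp y) ≤ M) :
    phiStar ω x ≤ M := by
  apply csSup_le (phiStar_set_nonempty ω x)
  rintro z ⟨y, hy, rfl⟩
  exact h y hy

lemma phiStar_nonneg (hω : IsW0 ω) {x : ℝ} (hx : 0 ≤ x) : 0 ≤ phiStar ω x := by
  have h := le_phiStar hω hx (le_refl (0:ℝ))
  have h1 : ω (Real.exp 0) = 0 := by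
    rw [Real.exp_zero]; exact omega_zero_of_le_one hω zero_le_one le_rfl
  rw [h1] at h; linarith

lemma phiStar_zero (hω : IsW0 ω) : phiStar ω 0 = 0 := by
  refine le_antisymm (phiStar_le fun y hy => ?_) (phiStar_nonneg hω le_rfl)
  have := phi_nonneg hω y
  linarith

lemma phiStar_mono (hω : IsW0 ω) {x x' : ℝ} (hx : 0 ≤ x) (hxx' : x ≤ x') :
    phiStar ω x ≤ phiStar ω x' := by
  refine phiStar_le fun y hy => ?_
  calc x * y - ω (Real.exp y) ≤ x' * y - ω (Real.exp y) := by nlinarith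
  _ ≤ phiStar ω x' := le_phiStar hω (hx.trans hxx') hy

lemma phiStar_convexOn (hω : IsW0 ω) : ConvexOn ℝ (Set.Ici 0) (phiStar ω) := by
  refine ⟨convex_Ici 0, fun x hx x' hx' a b ha hb hab => ?_⟩
  refine phiStar_le fun y hy => ?_
  have h1 : x * y - ω (Real.exp y) ≤ phiStar ω x := le_phiStar hω hx hy
  have h2 : x' * y - ω (Real.exp y) ≤ phiStar ω x' := le_phiStar hω hx' hy
  simp only [smul_eq_mul]
  have e : (a * x + b * x') * y - ω (Real.exp y)
      = a * (x * y - ω (Real.exp y)) + b * (x' * y - ω (Real.exp y)) := by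
    have hb1 : b = 1 - a := by linarith
    rw [hb1]; ring
  rw [e]
  exact add_le_add (mul_le_mul_of_nonneg_left h1 ha) (mul_le_mul_of_nonneg_left h2 hb)

/-- `g(t) = f(t)/t` is monotone. -/
lemma gquot_mono (hω : IsW0 ω) {s t : ℝ} (hs : 0 < s) (hst : s ≤ t) :
    phiStar ω s / s ≤ phiStar ω t / t := by
  have ht : 0 < t := lt_of_lt_of_le hs hst
  rw [div_le_div_iff₀ hs ht]
  -- f s ≤ (s/t) f t, i.e. f s * t ≤ f t * s
  have key : phiStar ω s ≤ s / t * phiStar ω t := by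
    refine phiStar_le fun y hy => ?_
    have h1 : t * y - ω (Real.exp y) ≤ phiStar ω t := le_phiStar hω ht.le hy
    have h2 : 0 ≤ ω (Real.exp y) := phi_nonneg hω y
    have hstt : s / t ≤ 1 := (div_le_one ht).2 hst
    have h3 : s / t * (t * y - ω (Real.exp y)) ≤ s / t * phiStar ω t :=
      mul_le_mul_of_nonneg_left h1 (by positivity)
    have h4 : s / t * (t * y) = s * y := by field_simp
    nlinarith [mul_le_mul_of_nonneg_right hstt h2]
  calc phiStar ω s * t ≤ s / t * phiStar ω t * t := by nlinarith
  _ = phiStar ω t * s := by field_simp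

/-- slope comparison (S1): for `0 ≤ a < b ≤ c < d`,
`slope f a b ≤ slope f c d`. -/
lemma slope_le_slope (hω : IsW0 ω) {a b c d : ℝ} (ha : 0 ≤ a) (hab : a < b)
    (hbc : b ≤ c) (hcd : c < d) :
    (phiStar ω b - phiStar ω a) / (b - a) ≤ (phiStar ω d - phiStar ω c) / (d - c) := by
  set f := phiStar ω
  have hcx := phiStar_convexOn hω
  have hb : (0:ℝ) ≤ b := ha.trans hab.le
  have hc : (0:ℝ) ≤ c := hb.trans hbc
  have hd : (0:ℝ) ≤ d := hc.trans hcd.le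
  have h1 : (f b - f a) / (b - a) ≤ (f d - f b) / (d - b) :=
    hcx.slope_mono_adjacent (Set.mem_Ici.2 ha) (Set.mem_Ici.2 hd) hab
      (lt_of_le_of_lt hbc hcd)
  have h2 : (f b - f d) / (b - d) ≤ (f c - f d) / (c - d) :=
    hcx.secant_mono (Set.mem_Ici.2 hd) (Set.mem_Ici.2 hb) (Set.mem_Ici.2 hc)
      (ne_of_lt (lt_of_le_of_lt hbc hcd)) (ne_of_lt hcd) hbc
  have e1 : (f b - f d) / (b - d) = (f d - f b) / (d - b) := by
    rw [← neg_div_neg_eq]; ring_nf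
  have e2 : (f c - f d) / (c - d) = (f d - f c) / (d - c) := by
    rw [← neg_div_neg_eq]; ring_nf
  rw [e1, e2] at h2
  linarith

end AuxLemmas
section Kcond

variable {ω : ℝ → ℝ}

/-- Master condition (K): a uniform bound for slopes of `f = φ*_ω` by the
slope-average at a dilated point. -/
def Kcond (ω : ℝ → ℝ) : Prop :=
  ∃ lam B : ℝ, 1 ≤ lam ∧ 0 ≤ B ∧ ∀ a b : ℝ, 0 ≤ a → a < b →
    phiStar ω b - phiStar ω a ≤ (b - a) * (B + phiStar ω (lam * b) / (lam * b))

/-- From a grid estimate to the master condition. -/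
lemma grid_to_K (hω : IsW0 ω) {x₀ y₀ A₀ : ℝ} (hx₀ : 0 < x₀) (hy₀ : 0 < y₀)
    (hA₀ : 0 ≤ A₀)
    (H : ∀ p : ℕ, 1 ≤ p →
      phiStar ω (x₀ * p) - phiStar ω (x₀ * ((p : ℝ) - 1)) ≤
        x₀ * (A₀ + phiStar ω (y₀ * p) / (y₀ * p))) : Kcond ω := by
  set f := phiStar ω with hf
  set lam : ℝ := max (y₀ / x₀ + 2 * y₀) 1 with hlam
  have hlam1 : 1 ≤ lam := le_max_right _ _
  have hlam0 : 0 < lam := lt_of_lt_of_le one_pos hlam1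
  have hlam2 : y₀ / x₀ + 2 * y₀ ≤ lam := le_max_left _ _
  refine ⟨lam, A₀ + f lam / lam, hlam1, ?_, ?_⟩
  · have := phiStar_nonneg hω hlam0.le
    positivity
  intro a b ha hab
  have hb : 0 < b := lt_of_le_of_lt ha hab
  set p : ℕ := ⌈b / x₀⌉₊ + 1 with hp
  have hp1 : 1 ≤ p := Nat.le_add_left 1 _
  have hple : (p : ℝ) ≤ b / x₀ + 2 := by
    have h1 : (⌈b / x₀⌉₊ : ℝ) < b / x₀ + 1 := Nat.ceil_lt_add_one (by positivity)
    have : (p : ℝ) = (⌈b / x₀⌉₊ : ℝ) + 1 := by push_cast [hp]; ring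
    linarith
  have hbp : b ≤ x₀ * ((p : ℝ) - 1) := by
    have h1 : b / x₀ ≤ (⌈b / x₀⌉₊ : ℝ) := Nat.le_ceil _
    have h2 : ((p : ℝ) - 1) = (⌈b / x₀⌉₊ : ℝ) := by push_cast [hp]; ring
    rw [h2]
    calc b = x₀ * (b / x₀) := by field_simp
    _ ≤ x₀ * (⌈b / x₀⌉₊ : ℝ) := by nlinarith
  have hcd : x₀ * ((p : ℝ) - 1) < x₀ * p := by nlinarith
  -- slope comparison
  have hs : (f b - f a) / (b - a) ≤
      (f (x₀ * p) - f (x₀ * ((p : ℝ) - 1))) / (x₀ * p - x₀ * ((p : ℝ) - 1)) :=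
    slope_le_slope hω ha hab hbp hcd
  have hden : x₀ * (p : ℝ) - x₀ * ((p : ℝ) - 1) = x₀ := by ring
  rw [hden] at hs
  have hH := H p hp1
  have hs2 : (f b - f a) / (b - a) ≤ A₀ + f (y₀ * p) / (y₀ * p) := by
    refine hs.trans ?_
    rw [div_le_iff₀ hx₀]
    calc f (x₀ * ↑p) - f (x₀ * ((p:ℝ) - 1)) ≤ x₀ * (A₀ + f (y₀ * ↑p) / (y₀ * ↑p)) := hH
    _ = (A₀ + f (y₀ * ↑p) / (y₀ * ↑p)) * x₀ := by ring
  have hyp0 : 0 < y₀ * (p : ℝ) := by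
    have : (0:ℝ) < (p:ℝ) := by exact_mod_cast hp1
    positivity
  have hgle : f (y₀ * p) / (y₀ * p) ≤ f lam / lam + f (lam * b) / (lam * b) := by
    rcases le_or_gt 1 b with hb1 | hb1
    · -- y₀ * p ≤ lam * b
      have h1 : y₀ * p ≤ y₀ * b / x₀ + 2 * y₀ := by
        have := mul_le_mul_of_nonneg_left hple hy₀.le
        calc y₀ * (p:ℝ) ≤ y₀ * (b / x₀ + 2) := this
        _ = y₀ * b / x₀ + 2 * y₀ := by ring
      have h2 : y₀ * b / x₀ + 2 * y₀ ≤ lam * b := by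
        have : y₀ / x₀ * b + 2 * y₀ * b ≤ lam * b := by nlinarith
        calc y₀ * b / x₀ + 2 * y₀ ≤ y₀ / x₀ * b + 2 * y₀ * b := by
              have : y₀ * b / x₀ = y₀ / x₀ * b := by ring
              nlinarith
        _ ≤ lam * b := this
      have := gquot_mono hω hyp0 (h1.trans h2)
      have h0 : 0 ≤ f lam / lam := by
        have := phiStar_nonneg hω hlam0.le; positivity
      linarith
    · -- b < 1 : y₀ * p ≤ lam
      have h1 : y₀ * p ≤ y₀ / x₀ + 2 * y₀ := by
        have := mul_le_mul_of_nonneg_left hple hy₀.le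
        have hbx : b / x₀ ≤ 1 / x₀ := by gcongr
        have h3 : y₀ * (b / x₀ + 2) ≤ y₀ * (1 / x₀ + 2) := by nlinarith
        calc y₀ * (p:ℝ) ≤ y₀ * (b / x₀ + 2) := this
        _ ≤ y₀ * (1 / x₀ + 2) := h3
        _ = y₀ / x₀ + 2 * y₀ := by ring
      have := gquot_mono hω hyp0 (h1.trans hlam2)
      have h0 : 0 ≤ f (lam * b) / (lam * b) := by
        have hlb : 0 < lam * b := by positivity
        have := phiStar_nonneg hω hlb.le; positivity
      linarith
  have hba : 0 < b - a := by linarith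
  rw [div_le_iff₀ hba] at hs2
  calc f b - f a ≤ (A₀ + f (y₀ * p) / (y₀ * p)) * (b - a) := hs2
  _ ≤ (A₀ + (f lam / lam + f (lam * b) / (lam * b))) * (b - a) := by nlinarith
  _ = (b - a) * (A₀ + f lam / lam + f (lam * b) / (lam * b)) := by ring
  _ = (b - a) * ((A₀ + f lam / lam) + f (lam * b) / (lam * b)) := by ring

end Kcond
section Bridges

variable {ω : ℝ → ℝ}

lemma seqQuot_Wmat (hω : IsW0 ω) {x : ℝ} (hx : 0 < x) {p : ℕ} (hp : 1 ≤ p) :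
    seqQuot (Wmat ω x) p =
      Real.exp ((phiStar ω (x * p) - phiStar ω (x * ((p : ℝ) - 1))) / x) := by
  have hp0 : p ≠ 0 := by omega
  have hc : ((p - 1 : ℕ) : ℝ) = (p : ℝ) - 1 := by
    have : (1:ℕ) ≤ p := hp
    push_cast [this]
    ring
  rw [seqQuot, if_neg hp0, Wmat, Wmat, hc, ← Real.exp_sub]
  congr 1
  rw [div_sub_div_same]

lemma rpow_Wmat {y : ℝ} (hy : 0 < y) {p : ℕ} (hp : 1 ≤ p) :
    (Wmat ω y p) ^ ((p : ℝ)⁻¹) = Real.exp (phiStar ω (y * p) / (y * p)) := by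
  have hp0 : (0:ℝ) < (p:ℝ) := by exact_mod_cast hp
  rw [Wmat, Real.rpow_def_of_pos (Real.exp_pos _), Real.log_exp]
  congr 1
  field_simp

/-- The Roumieu condition (ii). -/
def CondR (ω : ℝ → ℝ) : Prop :=
  ∀ x : ℝ, 0 < x → ∃ y : ℝ, 0 < y ∧ ∃ A : ℝ, 1 ≤ A ∧ ∀ p : ℕ, 1 ≤ p →
    seqQuot (Wmat ω x) p ≤ A * (Wmat ω y p) ^ ((p : ℝ)⁻¹)

/-- The Beurling condition (iii). -/
def CondB (ω : ℝ → ℝ) : Prop :=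
  ∀ x : ℝ, 0 < x → ∃ y : ℝ, 0 < y ∧ ∃ A : ℝ, 1 ≤ A ∧ ∀ p : ℕ, 1 ≤ p →
    seqQuot (Wmat ω y) p ≤ A * (Wmat ω x p) ^ ((p : ℝ)⁻¹)

lemma K_to_R (hω : IsW0 ω) (hK : Kcond ω) : CondR ω := by
  obtain ⟨lam, B, hlam, hB, hKs⟩ := hK
  have hlam0 : 0 < lam := lt_of_lt_of_le one_pos hlam
  intro x hx
  refine ⟨lam * x, by positivity, Real.exp B, Real.one_le_exp hB, fun p hp => ?_⟩
  have hp0 : (0:ℝ) < (p:ℝ) := by exact_mod_cast hp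
  have hp1 : (1:ℝ) ≤ (p:ℝ) := by exact_mod_cast hp
  rw [seqQuot_Wmat hω hx hp, rpow_Wmat (by positivity) hp, ← Real.exp_add]
  apply Real.exp_le_exp.2
  have ha : (0:ℝ) ≤ x * ((p:ℝ) - 1) := by nlinarith
  have hab : x * ((p:ℝ) - 1) < x * p := by nlinarith
  have hk := hKs (x * ((p:ℝ) - 1)) (x * p) ha hab
  have hd : x * (p:ℝ) - x * ((p:ℝ) - 1) = x := by ring
  rw [hd] at hk
  have he : lam * (x * p) = lam * x * p := by ring
  rw [he] at hk
  rw [div_le_iff₀ hx]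
  calc phiStar ω (x * ↑p) - phiStar ω (x * ((p:ℝ) - 1))
      ≤ x * (B + phiStar ω (lam * x * ↑p) / (lam * x * ↑p)) := hk
  _ = (B + phiStar ω (lam * x * ↑p) / (lam * x * ↑p)) * x := by ring

lemma K_to_B (hω : IsW0 ω) (hK : Kcond ω) : CondB ω := by
  obtain ⟨lam, B, hlam, hB, hKs⟩ := hK
  have hlam0 : 0 < lam := lt_of_lt_of_le one_pos hlam
  intro x hx
  refine ⟨x / lam, by positivity, Real.exp B, Real.one_le_exp hB, fun p hp => ?_⟩
  have hp0 : (0:ℝ) < (p:ℝ) := by exact_mod_cast hp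
  have hp1 : (1:ℝ) ≤ (p:ℝ) := by exact_mod_cast hp
  set y : ℝ := x / lam with hy
  have hy0 : 0 < y := by positivity
  rw [seqQuot_Wmat hω hy0 hp, rpow_Wmat hx hp, ← Real.exp_add]
  apply Real.exp_le_exp.2
  have ha : (0:ℝ) ≤ y * ((p:ℝ) - 1) := by nlinarith
  have hab : y * ((p:ℝ) - 1) < y * p := by nlinarith
  have hk := hKs (y * ((p:ℝ) - 1)) (y * p) ha hab
  have hd : y * (p:ℝ) - y * ((p:ℝ) - 1) = y := by ring
  rw [hd] at hk
  have he : lam * (y * p) = x * p := by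
    rw [hy]; field_simp
  rw [he] at hk
  rw [div_le_iff₀ hy0]
  calc phiStar ω (y * ↑p) - phiStar ω (y * ((p:ℝ) - 1))
      ≤ y * (B + phiStar ω (x * ↑p) / (x * ↑p)) := hk
  _ = (B + phiStar ω (x * ↑p) / (x * ↑p)) * y := by ring

lemma R_to_K (hω : IsW0 ω) (hR : CondR ω) : Kcond ω := by
  obtain ⟨y, hy, A, hA, h⟩ := hR 1 one_pos
  refine grid_to_K hω one_pos hy (Real.log_nonneg hA) fun p hp => ?_
  have hp0 : (0:ℝ) < (p:ℝ) := by exact_mod_cast hp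
  have h1 := h p hp
  rw [seqQuot_Wmat hω one_pos hp, rpow_Wmat hy hp] at h1
  have hA0 : (0:ℝ) < A := lt_of_lt_of_le one_pos hA
  have h2 := Real.log_le_log (Real.exp_pos _) h1
  rw [Real.log_exp, Real.log_mul (ne_of_gt hA0) (ne_of_gt (Real.exp_pos _)),
    Real.log_exp] at h2
  have h3 : phiStar ω (1 * ↑p) - phiStar ω (1 * ((p:ℝ) - 1)) ≤
      Real.log A + phiStar ω (y * ↑p) / (y * ↑p) := by
    have hd : (phiStar ω (1 * ↑p) - phiStar ω (1 * ((p:ℝ) - 1))) / 1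
        = phiStar ω (1 * ↑p) - phiStar ω (1 * ((p:ℝ) - 1)) := by rw [div_one]
    rw [← hd]; exact h2
  calc phiStar ω (1 * ↑p) - phiStar ω (1 * ((p:ℝ) - 1))
      ≤ Real.log A + phiStar ω (y * ↑p) / (y * ↑p) := h3
  _ = 1 * (Real.log A + phiStar ω (y * ↑p) / (y * ↑p)) := by ring

lemma B_to_K (hω : IsW0 ω) (hB : CondB ω) : Kcond ω := by
  obtain ⟨y, hy, A, hA, h⟩ := hB 1 one_pos
  refine grid_to_K hω hy one_pos (Real.log_nonneg hA) fun p hp => ?_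
  have hp0 : (0:ℝ) < (p:ℝ) := by exact_mod_cast hp
  have h1 := h p hp
  rw [seqQuot_Wmat hω hy hp, rpow_Wmat one_pos hp] at h1
  have hA0 : (0:ℝ) < A := lt_of_lt_of_le one_pos hA
  have h2 := Real.log_le_log (Real.exp_pos _) h1
  rw [Real.log_exp, Real.log_mul (ne_of_gt hA0) (ne_of_gt (Real.exp_pos _)),
    Real.log_exp] at h2
  rw [div_le_iff₀ hy] at h2
  calc phiStar ω (y * ↑p) - phiStar ω (y * ((p:ℝ) - 1))
      ≤ (Real.log A + phiStar ω (1 * ↑p) / (1 * ↑p)) * y := h2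
  _ = y * (Real.log A + phiStar ω (1 * ↑p) / (1 * ↑p)) := by ring

end Bridges
section CondIBridges

variable {ω : ℝ → ℝ}

/-- Condition (i). -/
def CondI (ω : ℝ → ℝ) : Prop :=
  ∃ a : ℕ, 0 < a ∧ ∃ A : ℝ, 1 ≤ A ∧ ∃ C : ℝ, 0 ≤ C ∧ ∀ t : ℝ, 0 ≤ t →
    omegaM (fun p => Wmat ω 1 p * Wmat ω (a : ℝ) p) (t ^ 2) ≤
      omegaM (Wmat ω 1) (A * t) + C

lemma log_W1 (p : ℕ) : Real.log (Wmat ω 1 p) = phiStar ω p := by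
  rw [Wmat, Real.log_exp, one_mul, div_one]

lemma log_Wa {a : ℝ} (p : ℕ) : Real.log (Wmat ω a p) = phiStar ω (a * p) / a := by
  rw [Wmat, Real.log_exp]

lemma log_term_W1 {s : ℝ} (hs : 0 < s) (q : ℕ) :
    Real.log (s ^ q / Wmat ω 1 q) = q * Real.log s - phiStar ω q := by
  have hW : Wmat ω 1 q ≠ 0 := ne_of_gt (Real.exp_pos _)
  rw [Real.log_div (pow_ne_zero _ (ne_of_gt hs)) hW, Real.log_pow, log_W1]

lemma log_term_V {a : ℕ} {s : ℝ} (hs : 0 < s) (p : ℕ) :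
    Real.log (s ^ p / (Wmat ω 1 p * Wmat ω (a:ℝ) p)) =
      p * Real.log s - phiStar ω p - phiStar ω ((a:ℝ) * p) / a := by
  have h1 : Wmat ω 1 p * Wmat ω (a:ℝ) p ≠ 0 :=
    ne_of_gt (mul_pos (Real.exp_pos _) (Real.exp_pos _))
  have hW1 : Wmat ω 1 p ≠ 0 := ne_of_gt (Real.exp_pos _)
  have hWa : Wmat ω (a:ℝ) p ≠ 0 := ne_of_gt (Real.exp_pos _)
  rw [Real.log_div (pow_ne_zero _ (ne_of_gt hs)) h1, Real.log_pow,
    Real.log_mul hW1 hWa, log_W1, log_Wa]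
  ring

/-- uniform bound on the terms `q log s − f(q)`. -/
lemma term_bound (hω : IsW0 ω) {s : ℝ} (hs : 0 < s) (q : ℕ) :
    (q : ℝ) * Real.log s - phiStar ω q ≤ ω (Real.exp (max (Real.log s) 0)) := by
  set y : ℝ := max (Real.log s) 0 with hy
  have hy0 : 0 ≤ y := le_max_right _ _
  have h1 : (q : ℝ) * y - ω (Real.exp y) ≤ phiStar ω q :=
    le_phiStar hω (Nat.cast_nonneg q) hy0
  have h2 : Real.log s ≤ y := le_max_left _ _
  nlinarith [Nat.cast_nonneg (α := ℝ) q]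

lemma bdd_W1 (hω : IsW0 ω) {s : ℝ} (hs : 0 < s) :
    BddAbove (Set.range fun q : ℕ => Real.log (s ^ q / Wmat ω 1 q)) := by
  refine ⟨ω (Real.exp (max (Real.log s) 0)), ?_⟩
  rintro z ⟨q, rfl⟩
  show Real.log (s ^ q / Wmat ω 1 q) ≤ _
  rw [log_term_W1 hs]
  exact term_bound hω hs q

lemma bdd_V (hω : IsW0 ω) {a : ℕ} (ha : 0 < a) {s : ℝ} (hs : 0 < s) :
    BddAbove (Set.range fun p : ℕ =>
      Real.log (s ^ p / (Wmat ω 1 p * Wmat ω (a:ℝ) p))) := by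
  refine ⟨ω (Real.exp (max (Real.log s) 0)), ?_⟩
  rintro z ⟨p, rfl⟩
  show Real.log (s ^ p / (Wmat ω 1 p * Wmat ω (a:ℝ) p)) ≤ _
  rw [log_term_V hs]
  have h1 : 0 ≤ phiStar ω ((a:ℝ) * p) / a := by
    have ha0 : (0:ℝ) < (a:ℝ) := by exact_mod_cast ha
    have := phiStar_nonneg hω (x := (a:ℝ) * p) (by positivity)
    positivity
  have := term_bound hω hs p
  linarith

lemma Wmat_zero (hω : IsW0 ω) {l : ℝ} (hl : 0 < l) : Wmat ω l 0 = 1 := by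
  rw [Wmat]
  norm_num
  rw [phiStar_zero hω]
  norm_num

lemma omegaM_at_zero {M : ℕ → ℝ} (hM0 : M 0 = 1) : omegaM M 0 = 0 := by
  have h : ∀ p : ℕ, Real.log ((0:ℝ) ^ p / M p) = 0 := by
    intro p
    match p with
    | 0 => simp [hM0]
    | q + 1 => simp [zero_pow (Nat.succ_ne_zero q)]
  rw [omegaM]
  calc (⨆ p : ℕ, Real.log ((0:ℝ) ^ p / M p)) = ⨆ _ : ℕ, (0:ℝ) := by
        congr 1; funext p; exact h p
  _ = 0 := ciSup_const

lemma K_to_I (hω : IsW0 ω) (hK : Kcond ω) : CondI ω := by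
  obtain ⟨lam, B, hlam, hB, hKs⟩ := hK
  have hlam0 : 0 < lam := lt_of_lt_of_le one_pos hlam
  set a : ℕ := ⌈2 * lam⌉₊ with haa
  have ha : 0 < a := Nat.ceil_pos.2 (by linarith)
  have ha2 : 2 * lam ≤ (a : ℝ) := Nat.le_ceil _
  have ha0 : (0:ℝ) < (a:ℝ) := by exact_mod_cast ha
  -- moderate growth
  have MG : ∀ p : ℕ, phiStar ω (2 * p) ≤
      phiStar ω p + phiStar ω ((a:ℝ) * p) / a + p * B := by
    intro p
    match p with
    | 0 =>
      simp only [Nat.cast_zero, mul_zero]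
      rw [phiStar_zero hω]
      norm_num
    | q + 1 =>
      set p' : ℕ := q + 1
      have hp0 : (0:ℝ) < (p':ℝ) := by positivity
      have hk := hKs (p' : ℝ) (2 * p') (by positivity) (by nlinarith)
      have hd : 2 * (p':ℝ) - (p':ℝ) = (p':ℝ) := by ring
      rw [hd] at hk
      -- p * g(2 lam p) ≤ f(a p)/a
      have hg : phiStar ω (lam * (2 * p')) / (lam * (2 * p')) ≤
          phiStar ω ((a:ℝ) * p') / ((a:ℝ) * p') := by
        apply gquot_mono hω (by positivity)
        nlinarith
      have he : (p':ℝ) * (phiStar ω ((a:ℝ) * p') / ((a:ℝ) * p'))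
          = phiStar ω ((a:ℝ) * p') / a := by
        field_simp
      have hgn : 0 ≤ phiStar ω ((a:ℝ) * p') / ((a:ℝ) * p') := by
        have := phiStar_nonneg hω (x := (a:ℝ) * p') (by positivity)
        positivity
      have h2 := mul_le_mul_of_nonneg_left hg hp0.le
      have h3 : (p':ℝ) * (B + phiStar ω (lam * (2 * p')) / (lam * (2 * p')))
          = p' * B + p' * (phiStar ω (lam * (2 * p')) / (lam * (2 * p'))) := by ring
      rw [h3] at hk
      linarith
  refine ⟨a, ha, Real.exp (B / 2), Real.one_le_exp (by linarith), 0, le_rfl,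
    fun t ht => ?_⟩
  rcases eq_or_lt_of_le ht with h0 | ht0
  · -- t = 0
    rw [← h0]
    have e1 : ((0:ℝ)) ^ 2 = 0 := by norm_num
    have e2 : Real.exp (B / 2) * 0 = 0 := by ring
    rw [e1, e2, omegaM_at_zero, omegaM_at_zero]
    · norm_num
    · exact Wmat_zero hω one_pos
    · rw [Wmat_zero hω one_pos, Wmat_zero hω ha0]; norm_num
  · -- t > 0
    set A : ℝ := Real.exp (B / 2) with hA
    have hA0 : 0 < A := Real.exp_pos _
    have hAt : 0 < A * t := by positivity
    have ht2 : 0 < t ^ 2 := by positivity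
    rw [omegaM, omegaM]
    have key : ∀ p : ℕ, Real.log ((t ^ 2) ^ p / (Wmat ω 1 p * Wmat ω (a:ℝ) p))
        ≤ (⨆ q : ℕ, Real.log ((A * t) ^ q / Wmat ω 1 q)) + 0 := by
      intro p
      have e1 : Real.log ((t ^ 2) ^ p / (Wmat ω 1 p * Wmat ω (a:ℝ) p))
          = p * Real.log (t ^ 2) - phiStar ω p - phiStar ω ((a:ℝ) * p) / a :=
        log_term_V ht2 p
      have e2 : Real.log (t ^ 2) = 2 * Real.log t := by
        rw [Real.log_pow]; norm_num
      have e3 : Real.log ((A * t) ^ (2 * p) / Wmat ω 1 (2 * p))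
          = (2 * p : ℕ) * Real.log (A * t) - phiStar ω ((2 * p : ℕ) : ℝ) :=
        log_term_W1 hAt (2 * p)
      have e4 : Real.log (A * t) = B / 2 + Real.log t := by
        rw [hA, Real.log_mul (ne_of_gt hA0) (ne_of_gt ht0), Real.log_exp]
      have e5 : ((2 * p : ℕ) : ℝ) = 2 * (p : ℝ) := by push_cast; ring
      have hMGp := MG p
      have step : Real.log ((t ^ 2) ^ p / (Wmat ω 1 p * Wmat ω (a:ℝ) p))
          ≤ Real.log ((A * t) ^ (2 * p) / Wmat ω 1 (2 * p)) := by
        rw [e1, e2, e3, e4, e5]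
        have hp0 : (0:ℝ) ≤ (p:ℝ) := Nat.cast_nonneg p
        nlinarith
      refine step.trans ?_
      have := le_ciSup (bdd_W1 hω hAt) (2 * p)
      simpa using this
    exact ciSup_le key

lemma I_to_K (hω : IsW0 ω) (hI : CondI ω) : Kcond ω := by
  obtain ⟨a, ha, A, hA, C, hC, hi⟩ := hI
  have ha0 : (0:ℝ) < (a:ℝ) := by exact_mod_cast ha
  have hA0 : (0:ℝ) < A := lt_of_lt_of_le one_pos hA
  set h : ℝ := Real.log A with hh
  have hh0 : 0 ≤ h := Real.log_nonneg hA
  -- discrete moderate growth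
  have MGd : ∀ p : ℕ, 1 ≤ p → phiStar ω (2 * p) ≤
      phiStar ω p + phiStar ω ((a:ℝ) * p) / a + 2 * p * h + C := by
    intro p hp
    refine phiStar_le fun y hy => ?_
    set t : ℝ := Real.exp (y - h) with hts
    have ht0 : 0 < t := Real.exp_pos _
    have hit := hi t ht0.le
    have ht2 : 0 < t ^ 2 := by positivity
    have hAt : 0 < A * t := by positivity
    -- lower bound for LHS
    have hlow : (p : ℝ) * (2 * (y - h)) - phiStar ω p - phiStar ω ((a:ℝ) * p) / a
        ≤ omegaM (fun q => Wmat ω 1 q * Wmat ω (a:ℝ) q) (t ^ 2) := by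
      rw [omegaM]
      have e1 : Real.log ((t ^ 2) ^ p / (Wmat ω 1 p * Wmat ω (a:ℝ) p))
          = p * Real.log (t ^ 2) - phiStar ω p - phiStar ω ((a:ℝ) * p) / a :=
        log_term_V ht2 p
      have e2 : Real.log (t ^ 2) = 2 * (y - h) := by
        rw [Real.log_pow, hts, Real.log_exp]
        norm_num
      have := le_ciSup (bdd_V hω ha ht2) p
      rw [e1, e2] at this
      exact this
    -- upper bound for RHS
    have hup : omegaM (Wmat ω 1) (A * t) ≤ ω (Real.exp y) := by
      rw [omegaM]
      apply ciSup_le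
      intro q
      rw [log_term_W1 hAt]
      have e4 : Real.log (A * t) = y := by
        rw [Real.log_mul (ne_of_gt hA0) (ne_of_gt ht0), hts, Real.log_exp, hh]
        ring
      rw [e4]
      have := le_phiStar hω (Nat.cast_nonneg q) hy
      linarith
    have hfin : (p : ℝ) * (2 * (y - h)) - phiStar ω p - phiStar ω ((a:ℝ) * p) / a
        ≤ ω (Real.exp y) + C := hlow.trans (hit.trans (add_le_add_left hup C))
    have e : (p : ℝ) * (2 * (y - h)) = 2 * p * y - 2 * p * h := by ring
    rw [e] at hfin
    linarith
  -- grid estimate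
  refine grid_to_K hω one_pos ha0 (by linarith : (0:ℝ) ≤ 2 * h + C) fun p hp => ?_
  have hp0 : (0:ℝ) < (p:ℝ) := by exact_mod_cast hp
  have hp1 : (1:ℝ) ≤ (p:ℝ) := by exact_mod_cast hp
  -- slope(p-1,p) ≤ slope(p,2p)
  have hs : (phiStar ω (1 * p) - phiStar ω (1 * ((p:ℝ) - 1))) / (1 * p - 1 * ((p:ℝ)-1))
      ≤ (phiStar ω (2 * p) - phiStar ω (p:ℝ)) / (2 * (p:ℝ) - (p:ℝ)) := by
    have := slope_le_slope hω (a := 1 * ((p:ℝ) - 1)) (b := 1 * (p:ℝ))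
      (c := (p:ℝ)) (d := 2 * (p:ℝ)) (by nlinarith) (by nlinarith) (by nlinarith)
      (by nlinarith)
    exact this
  have hd1 : 1 * (p:ℝ) - 1 * ((p:ℝ) - 1) = 1 := by ring
  have hd2 : 2 * (p:ℝ) - (p:ℝ) = (p:ℝ) := by ring
  rw [hd1, hd2, div_one] at hs
  have hMG := MGd p hp
  -- combine
  have hgn : 0 ≤ phiStar ω ((a:ℝ) * p) := phiStar_nonneg hω (by positivity)
  have key : (phiStar ω (2 * (p:ℝ)) - phiStar ω (p:ℝ)) / (p:ℝ) ≤
      (2 * h + C) + phiStar ω ((a:ℝ) * p) / ((a:ℝ) * p) := by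
    rw [div_le_iff₀ hp0]
    have e6 : phiStar ω ((a:ℝ) * p) / ((a:ℝ) * p) * (p:ℝ)
        = phiStar ω ((a:ℝ) * p) / a := by field_simp
    have hCp : C ≤ C * p := by nlinarith
    nlinarith
  calc phiStar ω (1 * ↑p) - phiStar ω (1 * ((p:ℝ) - 1))
      ≤ (phiStar ω (2 * (p:ℝ)) - phiStar ω (p:ℝ)) / (p:ℝ) := hs
  _ ≤ (2 * h + C) + phiStar ω ((a:ℝ) * p) / ((a:ℝ) * p) := key
  _ = 1 * ((2 * h + C) + phiStar ω ((a:ℝ) * p) / ((a:ℝ) * p)) := by ring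

end CondIBridges

theorem stmt15 (ω : ℝ → ℝ) (hω : IsW0 ω) :
    ((∃ a : ℕ, 0 < a ∧ ∃ A : ℝ, 1 ≤ A ∧ ∃ C : ℝ, 0 ≤ C ∧ ∀ t : ℝ, 0 ≤ t →
        omegaM (fun p => Wmat ω 1 p * Wmat ω (a : ℝ) p) (t ^ 2) ≤
          omegaM (Wmat ω 1) (A * t) + C) ↔
      (∀ x : ℝ, 0 < x → ∃ y : ℝ, 0 < y ∧ ∃ A : ℝ, 1 ≤ A ∧ ∀ p : ℕ, 1 ≤ p →
        seqQuot (Wmat ω x) p ≤ A * (Wmat ω y p) ^ ((p : ℝ)⁻¹))) ∧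
    ((∀ x : ℝ, 0 < x → ∃ y : ℝ, 0 < y ∧ ∃ A : ℝ, 1 ≤ A ∧ ∀ p : ℕ, 1 ≤ p →
        seqQuot (Wmat ω x) p ≤ A * (Wmat ω y p) ^ ((p : ℝ)⁻¹)) ↔
      (∀ x : ℝ, 0 < x → ∃ y : ℝ, 0 < y ∧ ∃ A : ℝ, 1 ≤ A ∧ ∀ p : ℕ, 1 ≤ p →
        seqQuot (Wmat ω y) p ≤ A * (Wmat ω x p) ^ ((p : ℝ)⁻¹))) := by
  constructor
  · exact ⟨fun hi => K_to_R hω (I_to_K hω hi), fun hR => K_to_I hω (R_to_K hω hR)⟩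
  · exact ⟨fun hR => K_to_B hω (R_to_K hω hR), fun hB => K_to_R hω (B_to_K hω hB)⟩
end

section
/- Let ω ∈ W₀. Then ω satisfies (ω₆) if and only if there exist A ≥ 1 and C ≥ 0 such that 2·inf_{s>0}(ω(s) + ω(t²/s)) ≤ ω(At) + C for all t ≥ 0. -/
open Real Filter Set

theorem stmt16 (ω : ℝ → ℝ) (hω : IsW0 ω) :
    Omega6 ω ↔
      ∃ A : ℝ, 1 ≤ A ∧ ∃ C : ℝ, 0 ≤ C ∧ ∀ t : ℝ, 0 ≤ t →
        2 * (⨅ s : Set.Ioi (0 : ℝ), (ω s.1 + ω (t ^ 2 / s.1))) ≤ ω (A * t) + C := by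
  obtain ⟨hcont, hmono, hzero, htop, hlog, hconv⟩ := hω
  have hnn : ∀ t : ℝ, 0 ≤ t → 0 ≤ ω t := by
    intro t ht
    rcases le_or_gt t 1 with h | h
    · exact (hzero t ⟨ht, h⟩).ge
    · have := hmono (Set.mem_Ici.2 (by norm_num : (0:ℝ) ≤ 1)) (Set.mem_Ici.2 ht) h.le
      have h1 : ω 1 = 0 := hzero 1 ⟨by norm_num, le_refl 1⟩
      linarith
  have hbdd : ∀ t : ℝ, 0 ≤ t →
      BddBelow (Set.range fun s : Set.Ioi (0 : ℝ) => ω s.1 + ω (t ^ 2 / s.1)) := by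
    intro t ht
    refine ⟨0, ?_⟩
    rintro x ⟨s, rfl⟩
    have hs : (0:ℝ) < s.1 := s.2
    have h1 := hnn s.1 hs.le
    have h2 := hnn (t ^ 2 / s.1) (div_nonneg (sq_nonneg t) hs.le)
    linarith
  constructor
  · rintro ⟨H, hH1, hH⟩
    refine ⟨H ^ 2, one_le_pow₀ hH1, 3 * H, by linarith, fun t ht => ?_⟩
    have hH0 : (0:ℝ) < H := by linarith
    rcases le_or_gt t 1 with h | h
    · have hinf : (⨅ s : Set.Ioi (0 : ℝ), (ω s.1 + ω (t ^ 2 / s.1))) ≤ 0 := by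
        have := ciInf_le (hbdd t ht) (⟨1, by norm_num⟩ : Set.Ioi (0:ℝ))
        simp only at this
        have h1 : ω 1 = 0 := hzero 1 ⟨by norm_num, le_refl 1⟩
        have h2 : ω (t ^ 2 / 1) = 0 := by
          refine hzero _ ⟨by positivity, ?_⟩
          rw [div_one]
          nlinarith
        rw [h1, h2] at this
        linarith
      have hr : 0 ≤ ω (H ^ 2 * t) := hnn _ (by positivity)
      nlinarith
    · have ht0 : (0:ℝ) < t := by linarith
      have hinf : (⨅ s : Set.Ioi (0 : ℝ), (ω s.1 + ω (t ^ 2 / s.1))) ≤ 2 * ω t := by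
        have := ciInf_le (hbdd t ht) (⟨t, ht0⟩ : Set.Ioi (0:ℝ))
        simp only at this
        have : ω t + ω (t ^ 2 / t) ≤ ω t + ω (t ^ 2 / t) := le_refl _
        have hd : t ^ 2 / t = t := by field_simp
        calc (⨅ s : Set.Ioi (0 : ℝ), (ω s.1 + ω (t ^ 2 / s.1)))
            ≤ ω t + ω (t ^ 2 / t) := ciInf_le (hbdd t ht) (⟨t, ht0⟩ : Set.Ioi (0:ℝ))
          _ = 2 * ω t := by rw [hd]; ring
      have h1 : 2 * ω t ≤ ω (H * t) + H := hH t ht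
      have h2 : 2 * ω (H * t) ≤ ω (H * (H * t)) + H := hH (H * t) (by positivity)
      have he : H * (H * t) = H ^ 2 * t := by ring
      rw [he] at h2
      linarith
  · rintro ⟨A, hA1, C, hC0, h⟩
    refine ⟨max A C, le_trans hA1 (le_max_left A C), fun t ht => ?_⟩
    rcases eq_or_lt_of_le ht with h0 | ht0
    · have h1 : ω t = 0 := hzero t ⟨ht, by rw [← h0]; norm_num⟩
      have h2 : ω (max A C * t) = 0 := by
        refine hzero _ ⟨by positivity, ?_⟩
        rw [← h0, mul_zero]; norm_num
      rw [h1, h2]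
      linarith [le_trans hA1 (le_max_left A C)]
    · have hkey : 2 * ω t ≤ (⨅ s : Set.Ioi (0 : ℝ), (ω s.1 + ω (t ^ 2 / s.1))) := by
        refine le_ciInf fun s => ?_
        have hs : (0:ℝ) < s.1 := s.2
        have hc := hconv.2 (Set.mem_univ (Real.log s.1))
          (Set.mem_univ (Real.log (t ^ 2 / s.1)))
          (by norm_num : (0:ℝ) ≤ 1/2) (by norm_num : (0:ℝ) ≤ 1/2) (by norm_num)
        simp only [smul_eq_mul] at hc
        have hd : (0:ℝ) < t ^ 2 / s.1 := by positivity
        have he1 : Real.exp (Real.log s.1) = s.1 := Real.exp_log hs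
        have he2 : Real.exp (Real.log (t ^ 2 / s.1)) = t ^ 2 / s.1 := Real.exp_log hd
        have hmid : 1/2 * Real.log s.1 + 1/2 * Real.log (t ^ 2 / s.1) = Real.log t := by
          have : Real.log s.1 + Real.log (t ^ 2 / s.1) = Real.log (t ^ 2) := by
            rw [← Real.log_mul hs.ne' hd.ne']
            congr 1
            field_simp
          have ht2 : Real.log (t ^ 2) = 2 * Real.log t := by
            rw [Real.log_pow]; push_cast; ring
          linarith
        rw [hmid, he1, he2, Real.exp_log ht0] at hc
        linarith
      have h4 := h t ht
      have hω0 := hnn t ht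
      have hm : ω (A * t) ≤ ω (max A C * t) := by
        refine hmono (Set.mem_Ici.2 (by positivity)) (Set.mem_Ici.2 (by positivity)) ?_
        exact mul_le_mul_of_nonneg_right (le_max_left A C) ht
      have : 2 * ω t ≤ 4 * ω t := by linarith
      calc 2 * ω t ≤ 4 * ω t := this
        _ = 2 * (2 * ω t) := by ring
        _ ≤ 2 * (⨅ s : Set.Ioi (0 : ℝ), (ω s.1 + ω (t ^ 2 / s.1))) := by linarith
        _ ≤ ω (A * t) + C := h4
        _ ≤ ω (max A C * t) + max A C := by
            have := le_max_right A C
            linarith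
end

section
/- Let ω ∈ W₀. Then ω satisfies (ω₁) if and only if there exist L ≥ 1 and C ≥ 0 such that inf_{s>0}(ω(s) + ω(4t²/s)) ≤ L·ω(t) + C for all t ≥ 0. -/
/-! For `s > 0` one of `s` and `x² / s` is at least `x`, so for a nonnegative weight that is
monotone on `[0, ∞)` we get `ω x ≤ (ω ⋆̌ ω)(x²) ≤ 2 ω x`, the upper bound by taking `s = x`.
With `x = 2t`, both directions of the equivalence reduce to comparing `ω (2t)` with `ω t`. -/


open Real Filter Set

/-- The lower Legendre conjugate `σ ⋆̌ τ`. -/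
noncomputable def lowerConj (σ τ : ℝ → ℝ) (t : ℝ) : ℝ :=
  ⨅ s : Ioi (0 : ℝ), (σ s + τ (t / s))

section Monotone

variable {ω : ℝ → ℝ}

theorem bddBelow_range_add_comp_div (hnn : ∀ x, 0 ≤ x → 0 ≤ ω x) {t : ℝ} (ht : 0 ≤ t) :
    BddBelow (range fun s : Ioi (0 : ℝ) => ω s + ω (t / s)) := by
  refine ⟨0, ?_⟩
  rintro _ ⟨⟨s, hs⟩, rfl⟩
  have hs : (0 : ℝ) < s := hs
  exact add_nonneg (hnn s hs.le) (hnn _ (div_nonneg ht hs.le))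

theorem lowerConj_self_le (hnn : ∀ x, 0 ≤ x → 0 ≤ ω x) {t s : ℝ} (ht : 0 ≤ t) (hs : 0 < s) :
    lowerConj ω ω t ≤ ω s + ω (t / s) :=
  ciInf_le (bddBelow_range_add_comp_div hnn ht) (⟨s, hs⟩ : Ioi (0 : ℝ))

theorem le_lowerConj_self_sq (hmono : MonotoneOn ω (Ici 0)) (hnn : ∀ x, 0 ≤ x → 0 ≤ ω x)
    {x : ℝ} (hx : 0 ≤ x) : ω x ≤ lowerConj ω ω (x ^ 2) := by
  refine le_ciInf fun ⟨s, hs⟩ => ?_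
  have hs : (0 : ℝ) < s := hs
  have hquot : 0 ≤ x ^ 2 / s := by positivity
  rcases le_or_gt x s with hxs | hsx
  · linarith [hmono hx hs.le hxs, hnn _ hquot]
  · have hx_le : x ≤ x ^ 2 / s := by
      rw [le_div_iff₀ hs]
      nlinarith
    linarith [hmono hx hquot hx_le, hnn s hs.le]

end Monotone

namespace IsW0

variable {ω : ℝ → ℝ} (hω : IsW0 ω)
include hω

theorem nonneg {x : ℝ} (hx : 0 ≤ x) : 0 ≤ ω x := by
  have h0 : ω 0 = 0 := hω.2.2.1 0 ⟨le_rfl, zero_le_one⟩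
  exact h0 ▸ hω.2.1 self_mem_Ici hx hx

theorem lowerConj_self_sq_le_two_mul {x : ℝ} (hx : 0 ≤ x) :
    lowerConj ω ω (x ^ 2) ≤ 2 * ω x := by
  rcases hx.eq_or_lt with rfl | hx
  · have h0 : ω 0 = 0 := hω.2.2.1 0 ⟨le_rfl, zero_le_one⟩
    have h1 : ω 1 = 0 := hω.2.2.1 1 ⟨zero_le_one, le_rfl⟩
    simpa [h0, h1] using lowerConj_self_le (fun _ => hω.nonneg) (le_refl (0 : ℝ)) one_pos
  · have hsq : x ^ 2 / x = x := by field_simp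
    simpa [hsq, two_mul] using lowerConj_self_le (fun _ => hω.nonneg) (sq_nonneg x) hx

end IsW0

theorem stmt17 (ω : ℝ → ℝ) (hω : IsW0 ω) :
    (∃ L : ℝ, 1 ≤ L ∧ ∀ t : ℝ, 0 ≤ t → ω (2 * t) ≤ L * (ω t + 1)) ↔
    (∃ L : ℝ, 1 ≤ L ∧ ∃ C : ℝ, 0 ≤ C ∧ ∀ t : ℝ, 0 ≤ t →
      (⨅ s : Set.Ioi (0 : ℝ), (ω s.1 + ω (4 * t ^ 2 / s.1))) ≤ L * ω t + C) := by
  have hconj : ∀ t : ℝ, (⨅ s : Set.Ioi (0 : ℝ), (ω s.1 + ω (4 * t ^ 2 / s.1))) =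
      lowerConj ω ω ((2 * t) ^ 2) := fun t => by rw [lowerConj, mul_pow]; norm_num
  simp only [hconj]
  constructor
  · rintro ⟨L, hL, h⟩
    refine ⟨2 * L, by linarith, 2 * L, by linarith, fun t ht => ?_⟩
    calc lowerConj ω ω ((2 * t) ^ 2) ≤ 2 * ω (2 * t) :=
          hω.lowerConj_self_sq_le_two_mul (by linarith)
      _ ≤ 2 * (L * (ω t + 1)) := by linarith [h t ht]
      _ = 2 * L * ω t + 2 * L := by ring
  · rintro ⟨L, hL, C, hC, h⟩
    refine ⟨L + C, by linarith, fun t ht => ?_⟩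
    have hωt : 0 ≤ ω t := hω.nonneg ht
    calc ω (2 * t) ≤ lowerConj ω ω ((2 * t) ^ 2) :=
          le_lowerConj_self_sq hω.2.1 (fun _ => hω.nonneg) (by linarith)
      _ ≤ L * ω t + C := h t ht
      _ ≤ (L + C) * (ω t + 1) := by nlinarith
end
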